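/- arXiv:2105.01592 — 6 statements merged into one kernel-verified Lean document; each statement's English description precedes it below -/
import Mathlib

section
/- For every n ≥ 2, the path P_{2n} on 2n vertices is independence equivalent to the disjoint union P_{n-1} ∪ C_{n+1}; that is, I(P_{2n}, x) = I(P_{n-1}, x) · I(C_{n+1}, x). -/
open Polynomial

open scoped Classical in
/-- The independence polynomial of a finite simple graph: the `k`-th coefficient counts
independent vertex sets of size `k`. -/
noncomputable def indepPoly {V : Type*} [Fintype V] (G : SimpleGraph V) : Polynomial ℝ :=
  ∑ s ∈ Finset.univ.filter (fun s : Finset V => ∀ u ∈ s, ∀ v ∈ s, ¬ G.Adj u v), X ^ s.card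

open scoped Classical

namespace IndepAux

/-- Shift embedding `Fin a ↪ Fin b`, `u ↦ u + k`. -/
def shiftEmb (a b k : ℕ) (h : a + k ≤ b) : Fin a ↪ Fin b :=
  ⟨fun u => ⟨u.val + k, by omega⟩, fun u w huw => by
    apply Fin.ext
    have := congrArg Fin.val huw
    simpa using this⟩

@[simp] lemma shiftEmb_val (a b k : ℕ) (h : a + k ≤ b) (u : Fin a) :
    (shiftEmb a b k h u).val = u.val + k := rfl

lemma map_preimage_of_range {α β : Type*} (e : α ↪ β) (t : Finset β)
    (ht : ∀ x ∈ t, ∃ u, e u = x) :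
    (t.preimage e e.injective.injOn).map e = t := by
  classical
  rw [Finset.map_eq_image, Finset.image_preimage]
  refine Finset.filter_true_of_mem ?_
  intro x hx
  obtain ⟨u, hu⟩ := ht x hx
  exact ⟨u, hu⟩

lemma card_preimage_of_range {α β : Type*} (e : α ↪ β) (t : Finset β)
    (ht : ∀ x ∈ t, ∃ u, e u = x) :
    (t.preimage e e.injective.injOn).card = t.card := by
  classical
  have := map_preimage_of_range e t ht
  calc (t.preimage e e.injective.injOn).card
      = ((t.preimage e e.injective.injOn).map e).card := (Finset.card_map _).symm
    _ = t.card := by rw [this]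

/-- Master lemma 1: summing over independent sets contained in the range of an
adjacency-preserving embedding gives the independence polynomial of the smaller graph. -/
lemma sum_indep_range {a b : ℕ} (G : SimpleGraph (Fin a)) (H : SimpleGraph (Fin b))
    (e : Fin a ↪ Fin b) (hadj : ∀ u w, G.Adj u w ↔ H.Adj (e u) (e w)) :
    ∑ s ∈ Finset.univ.filter (fun s : Finset (Fin b) =>
        (∀ u ∈ s, ∀ v ∈ s, ¬ H.Adj u v) ∧ ∀ x ∈ s, ∃ u, e u = x), (X : Polynomial ℝ) ^ s.card
      = indepPoly G := by
  rw [indepPoly]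
  refine Finset.sum_nbij' (i := fun t => t.preimage e e.injective.injOn)
    (j := fun s => s.map e) ?_ ?_ ?_ ?_ ?_
  · intro t ht
    simp only [Finset.mem_filter, Finset.mem_univ, true_and] at ht ⊢
    intro u hu v hv
    rw [Finset.mem_preimage] at hu hv
    rw [hadj]
    exact ht.1 _ hu _ hv
  · intro s hs
    simp only [Finset.mem_filter, Finset.mem_univ, true_and] at hs ⊢
    constructor
    · intro u hu v hv
      rw [Finset.mem_map] at hu hv
      obtain ⟨u', hu', rfl⟩ := hu
      obtain ⟨v', hv', rfl⟩ := hv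
      rw [← hadj]
      exact hs _ hu' _ hv'
    · intro x hx
      rw [Finset.mem_map] at hx
      obtain ⟨u, _, rfl⟩ := hx
      exact ⟨u, rfl⟩
  · intro t ht
    simp only [Finset.mem_filter, Finset.mem_univ, true_and] at ht
    exact map_preimage_of_range e t ht.2
  · intro s _
    exact Finset.preimage_map e s
  · intro t ht
    simp only [Finset.mem_filter, Finset.mem_univ, true_and] at ht
    rw [card_preimage_of_range e t ht.2]

/-- Master lemma 1': summing over independent sets avoiding a vertex `v` whose complement
is the range of an adjacency-preserving embedding. -/
lemma sum_indep_notmem {a b : ℕ} (G : SimpleGraph (Fin a)) (H : SimpleGraph (Fin b))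
    (e : Fin a ↪ Fin b) (v : Fin b) (hadj : ∀ u w, G.Adj u w ↔ H.Adj (e u) (e w))
    (hv : ∀ u, e u ≠ v) (hsurj : ∀ x : Fin b, x ≠ v → ∃ u, e u = x) :
    ∑ s ∈ Finset.univ.filter (fun s : Finset (Fin b) =>
        (∀ u ∈ s, ∀ w ∈ s, ¬ H.Adj u w) ∧ v ∉ s), (X : Polynomial ℝ) ^ s.card
      = indepPoly G := by
  rw [← sum_indep_range G H e hadj]
  apply Finset.sum_congr _ (fun _ _ => rfl)
  apply Finset.filter_congr
  intro s _
  constructor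
  · rintro ⟨h1, h2⟩
    refine ⟨h1, fun x hx => hsurj x ?_⟩
    rintro rfl; exact h2 hx
  · rintro ⟨h1, h2⟩
    refine ⟨h1, fun hvs => ?_⟩
    obtain ⟨u, hu⟩ := h2 v hvs
    exact hv u hu

/-- Master lemma 2: summing over independent sets containing a vertex `v`, whose
non-neighbours distinct from `v` form the range of an adjacency-preserving embedding. -/
lemma sum_indep_mem {a b : ℕ} (G : SimpleGraph (Fin a)) (H : SimpleGraph (Fin b))
    (e : Fin a ↪ Fin b) (v : Fin b)
    (hadj : ∀ u w, G.Adj u w ↔ H.Adj (e u) (e w))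
    (hv : ∀ u, e u ≠ v)
    (hvadj : ∀ u, ¬ H.Adj v (e u))
    (hfull : ∀ x : Fin b, x ≠ v → ¬ H.Adj v x → ∃ u, e u = x) :
    ∑ s ∈ Finset.univ.filter (fun s : Finset (Fin b) =>
        (∀ u ∈ s, ∀ w ∈ s, ¬ H.Adj u w) ∧ v ∈ s), (X : Polynomial ℝ) ^ s.card
      = X * indepPoly G := by
  rw [indepPoly, Finset.mul_sum]
  have hrange : ∀ t : Finset (Fin b),
      ((∀ u ∈ t, ∀ w ∈ t, ¬ H.Adj u w) ∧ v ∈ t) → ∀ x ∈ t.erase v, ∃ u, e u = x := by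
    rintro t ⟨h1, h2⟩ x hx
    rw [Finset.mem_erase] at hx
    exact hfull x hx.1 (h1 _ h2 _ hx.2)
  refine Finset.sum_nbij' (i := fun t => (t.erase v).preimage e e.injective.injOn)
    (j := fun s => insert v (s.map e)) ?_ ?_ ?_ ?_ ?_
  · intro t ht
    simp only [Finset.mem_filter, Finset.mem_univ, true_and] at ht ⊢
    intro u hu w hw
    rw [Finset.mem_preimage, Finset.mem_erase] at hu hw
    rw [hadj]
    exact ht.1 _ hu.2 _ hw.2
  · intro s hs
    simp only [Finset.mem_filter, Finset.mem_univ, true_and] at hs ⊢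
    refine ⟨?_, Finset.mem_insert_self _ _⟩
    intro u hu w hw
    rw [Finset.mem_insert] at hu hw
    rcases hu with rfl | hu <;> rcases hw with rfl | hw
    · exact H.loopless.irrefl _
    · rw [Finset.mem_map] at hw
      obtain ⟨w', _, rfl⟩ := hw
      exact hvadj w'
    · rw [Finset.mem_map] at hu
      obtain ⟨u', _, rfl⟩ := hu
      intro h
      exact hvadj u' h.symm
    · rw [Finset.mem_map] at hu hw
      obtain ⟨u', hu', rfl⟩ := hu
      obtain ⟨w', hw', rfl⟩ := hw
      rw [← hadj]
      exact hs _ hu' _ hw'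
  · intro t ht
    simp only [Finset.mem_filter, Finset.mem_univ, true_and] at ht
    show insert v (((t.erase v).preimage e e.injective.injOn).map e) = t
    rw [map_preimage_of_range e _ (hrange t ht)]
    exact Finset.insert_erase ht.2
  · intro s _
    show ((insert v (s.map e)).erase v).preimage e e.injective.injOn = s
    ext u
    simp only [Finset.mem_preimage, Finset.mem_erase, Finset.mem_insert, hv u, false_or,
      ne_eq, not_false_eq_true, true_and]
    exact Finset.mem_map' e
  · intro t ht
    simp only [Finset.mem_filter, Finset.mem_univ, true_and] at ht
    rw [card_preimage_of_range e _ (hrange t ht)]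
    have hc : (t.erase v).card = t.card - 1 := Finset.card_erase_of_mem ht.2
    have hpos : 1 ≤ t.card := Finset.card_pos.mpr ⟨v, ht.2⟩
    rw [hc, ← pow_succ', Nat.sub_add_cancel hpos]

/-- Splitting the independence polynomial according to membership of a vertex. -/
lemma indepPoly_split {b : ℕ} (H : SimpleGraph (Fin b)) (v : Fin b) :
    indepPoly H =
      (∑ s ∈ Finset.univ.filter (fun s : Finset (Fin b) =>
          (∀ u ∈ s, ∀ w ∈ s, ¬ H.Adj u w) ∧ v ∈ s), (X : Polynomial ℝ) ^ s.card) +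
      (∑ s ∈ Finset.univ.filter (fun s : Finset (Fin b) =>
          (∀ u ∈ s, ∀ w ∈ s, ¬ H.Adj u w) ∧ v ∉ s), (X : Polynomial ℝ) ^ s.card) := by
  rw [indepPoly]
  have hdisj : Disjoint
      (Finset.univ.filter (fun s : Finset (Fin b) =>
          (∀ u ∈ s, ∀ w ∈ s, ¬ H.Adj u w) ∧ v ∈ s))
      (Finset.univ.filter (fun s : Finset (Fin b) =>
          (∀ u ∈ s, ∀ w ∈ s, ¬ H.Adj u w) ∧ v ∉ s)) := by
    rw [Finset.disjoint_left]
    intro s hs1 hs2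
    simp only [Finset.mem_filter] at hs1 hs2
    exact hs2.2.2 hs1.2.2
  rw [← Finset.sum_union hdisj]
  refine Finset.sum_congr ?_ (fun _ _ => rfl)
  ext s
  simp only [Finset.mem_union, Finset.mem_filter, Finset.mem_univ, true_and]
  tauto

/-- Recurrence for paths: `I(P_{m+2}) = I(P_{m+1}) + x·I(P_m)`. -/
lemma path_succ_succ (m : ℕ) :
    indepPoly (SimpleGraph.pathGraph (m + 2)) =
      indepPoly (SimpleGraph.pathGraph (m + 1)) + X * indepPoly (SimpleGraph.pathGraph m) := by
  rw [indepPoly_split (SimpleGraph.pathGraph (m + 2)) (Fin.last (m + 1)), add_comm]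
  congr 1
  · refine sum_indep_notmem (SimpleGraph.pathGraph (m + 1)) _
      (shiftEmb (m + 1) (m + 2) 0 (by omega)) (Fin.last (m + 1)) ?_ ?_ ?_
    · intro u w
      rw [SimpleGraph.pathGraph_adj, SimpleGraph.pathGraph_adj]
      simp [shiftEmb]
    · intro u
      have := u.isLt
      intro h
      have := congrArg Fin.val h
      simp [Fin.val_last] at this
      omega
    · intro x hx
      have hxlt : x.val < m + 2 := x.isLt
      have hxne : x.val ≠ m + 1 := by
        intro h; exact hx (Fin.ext (by simp [Fin.val_last, h]))
      exact ⟨⟨x.val, by omega⟩, Fin.ext (by simp)⟩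
  · refine sum_indep_mem (SimpleGraph.pathGraph m) _
      (shiftEmb m (m + 2) 0 (by omega)) (Fin.last (m + 1)) ?_ ?_ ?_ ?_
    · intro u w
      rw [SimpleGraph.pathGraph_adj, SimpleGraph.pathGraph_adj]
      simp [shiftEmb]
    · intro u
      have := u.isLt
      intro h
      have := congrArg Fin.val h
      simp [Fin.val_last] at this
      omega
    · intro u
      have := u.isLt
      rw [SimpleGraph.pathGraph_adj]
      simp only [Fin.val_last, shiftEmb_val]
      simp only [Function.Embedding.coeFn_mk, not_or]
      omega
    · intro x hx hadj
      have hxlt : x.val < m + 2 := x.isLt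
      have hxne : x.val ≠ m + 1 := by
        intro h; exact hx (Fin.ext (by simp [Fin.val_last, h]))
      rw [SimpleGraph.pathGraph_adj] at hadj
      simp only [Fin.val_last] at hadj
      push_neg at hadj
      have hxm : x.val < m := by omega
      exact ⟨⟨x.val, hxm⟩, Fin.ext (by simp)⟩

lemma cycle_adj_val {n : ℕ} {u w : Fin (n + 2)} :
    (SimpleGraph.cycleGraph (n + 2)).Adj u w ↔
      u.val = (w.val + 1) % (n + 2) ∨ w.val = (u.val + 1) % (n + 2) := by
  rw [SimpleGraph.cycleGraph_adj, sub_eq_iff_eq_add, sub_eq_iff_eq_add]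
  have h1 : ∀ a : Fin (n + 2), ((1 : Fin (n + 2)) + a).val = (a.val + 1) % (n + 2) := by
    intro a; simp [Fin.add_def, Fin.val_one, Nat.add_comm]
  constructor
  · rintro (h | h)
    · left; rw [h, h1]
    · right; rw [h, h1]
  · rintro (h | h)
    · left; exact Fin.ext (by rw [h1, ← h])
    · right; exact Fin.ext (by rw [h1, ← h])

/-- Formula for cycles: `I(C_{m+3}) = I(P_{m+2}) + x·I(P_m)`. -/
lemma cycle_eq (m : ℕ) :
    indepPoly (SimpleGraph.cycleGraph (m + 3)) =
      indepPoly (SimpleGraph.pathGraph (m + 2)) + X * indepPoly (SimpleGraph.pathGraph m) := by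
  have hcast : (m + 3) = (m + 1) + 2 := by omega
  rw [indepPoly_split (SimpleGraph.cycleGraph (m + 3)) (Fin.last (m + 2)), add_comm]
  congr 1
  · refine sum_indep_notmem (SimpleGraph.pathGraph (m + 2)) _
      (shiftEmb (m + 2) (m + 3) 0 (by omega)) (Fin.last (m + 2)) ?_ ?_ ?_
    · intro u w
      have hu := u.isLt; have hw := w.isLt
      rw [SimpleGraph.pathGraph_adj]
      rw [show (SimpleGraph.cycleGraph (m + 3)).Adj (shiftEmb (m+2) (m+3) 0 (by omega) u)
            (shiftEmb (m+2) (m+3) 0 (by omega) w) ↔ _ from cycle_adj_val (n := m + 1)]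
      simp only [shiftEmb_val]
      rw [Nat.mod_eq_of_lt (by omega), Nat.mod_eq_of_lt (by omega)]
      omega
    · intro u
      have := u.isLt
      intro h
      have := congrArg Fin.val h
      simp [Fin.val_last, shiftEmb] at this
      omega
    · intro x hx
      have hxlt : x.val < m + 3 := x.isLt
      have hxne : x.val ≠ m + 2 := by
        intro h; exact hx (Fin.ext (by simp [Fin.val_last, h]))
      exact ⟨⟨x.val, by omega⟩, Fin.ext (by simp [shiftEmb])⟩
  · refine sum_indep_mem (SimpleGraph.pathGraph m) _
      (shiftEmb m (m + 3) 1 (by omega)) (Fin.last (m + 2)) ?_ ?_ ?_ ?_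
    · intro u w
      have hu := u.isLt; have hw := w.isLt
      rw [SimpleGraph.pathGraph_adj]
      rw [show (SimpleGraph.cycleGraph (m + 3)).Adj (shiftEmb m (m+3) 1 (by omega) u)
            (shiftEmb m (m+3) 1 (by omega) w) ↔ _ from cycle_adj_val (n := m + 1)]
      simp only [shiftEmb_val]
      rw [Nat.mod_eq_of_lt (by omega), Nat.mod_eq_of_lt (by omega)]
      omega
    · intro u
      have := u.isLt
      intro h
      have := congrArg Fin.val h
      simp [Fin.val_last, shiftEmb_val] at this
      omega
    · intro u
      have hu := u.isLt
      rw [show (SimpleGraph.cycleGraph (m + 3)).Adj (Fin.last (m+2))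
            (shiftEmb m (m+3) 1 (by omega) u) ↔ _ from cycle_adj_val (n := m + 1)]
      simp only [shiftEmb_val, Fin.val_last]
      have h2 : (m + 2 + 1) % (m + 3) = 0 := by
        rw [show m + 2 + 1 = m + 3 by omega, Nat.mod_self]
      rw [h2, Nat.mod_eq_of_lt (by omega)]
      omega
    · intro x hx hadj
      have hxlt : x.val < m + 3 := x.isLt
      have hxne : x.val ≠ m + 2 := by
        intro h; exact hx (Fin.ext (by simp [Fin.val_last, h]))
      rw [show (SimpleGraph.cycleGraph (m + 3)).Adj (Fin.last (m+2)) x ↔ _ from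
            cycle_adj_val (n := m + 1)] at hadj
      simp only [Fin.val_last] at hadj
      push_neg at hadj
      obtain ⟨h1, h2⟩ := hadj
      have h3 : (m + 2 + 1) % (m + 3) = 0 := by
        rw [show m + 2 + 1 = m + 3 by omega, Nat.mod_self]
      rw [h3] at h2
      rw [Nat.mod_eq_of_lt (by omega)] at h1
      have : 1 ≤ x.val ∧ x.val ≤ m := by omega
      exact ⟨⟨x.val - 1, by omega⟩, Fin.ext (by simp [shiftEmb_val]; omega)⟩

lemma indepPoly_eq_of_no_adj {b : ℕ} (H : SimpleGraph (Fin b)) (h : ∀ u v : Fin b, ¬ H.Adj u v) :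
    indepPoly H = ∑ s ∈ (Finset.univ : Finset (Finset (Fin b))), (X : Polynomial ℝ) ^ s.card := by
  rw [indepPoly]
  refine Finset.sum_congr ?_ (fun _ _ => rfl)
  ext s
  simp only [Finset.mem_filter, Finset.mem_univ, true_and, iff_true]
  exact fun u _ v _ => h u v

lemma path_zero : indepPoly (SimpleGraph.pathGraph 0) = 1 := by
  rw [indepPoly_eq_of_no_adj _ (fun u _ => u.elim0)]
  rw [show (Finset.univ : Finset (Finset (Fin 0))) = {∅} by decide]
  simp

lemma path_one : indepPoly (SimpleGraph.pathGraph 1) = 1 + X := by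
  rw [indepPoly_eq_of_no_adj _ (fun u v => by rw [SimpleGraph.pathGraph_adj]; omega)]
  rw [show (Finset.univ : Finset (Finset (Fin 1))) = {∅, {0}} by decide]
  rw [Finset.sum_pair (by decide)]
  simp

/-- The main combinatorial identity, proved by induction with a companion identity. -/
lemma key (m : ℕ) :
    indepPoly (SimpleGraph.pathGraph (2 * m + 4)) =
        indepPoly (SimpleGraph.pathGraph (m + 1)) * indepPoly (SimpleGraph.pathGraph (m + 2)) +
          X * (indepPoly (SimpleGraph.pathGraph (m + 1)) * indepPoly (SimpleGraph.pathGraph m)) ∧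
    indepPoly (SimpleGraph.pathGraph (2 * m + 5)) =
        indepPoly (SimpleGraph.pathGraph (m + 2)) ^ 2 +
          X * indepPoly (SimpleGraph.pathGraph (m + 1)) ^ 2 := by
  induction m with
  | zero =>
    have h2 : indepPoly (SimpleGraph.pathGraph 2) =
        indepPoly (SimpleGraph.pathGraph 1) + X * indepPoly (SimpleGraph.pathGraph 0) :=
      path_succ_succ 0
    have h3 : indepPoly (SimpleGraph.pathGraph 3) =
        indepPoly (SimpleGraph.pathGraph 2) + X * indepPoly (SimpleGraph.pathGraph 1) :=
      path_succ_succ 1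
    have h4 : indepPoly (SimpleGraph.pathGraph 4) =
        indepPoly (SimpleGraph.pathGraph 3) + X * indepPoly (SimpleGraph.pathGraph 2) :=
      path_succ_succ 2
    have h5 : indepPoly (SimpleGraph.pathGraph 5) =
        indepPoly (SimpleGraph.pathGraph 4) + X * indepPoly (SimpleGraph.pathGraph 3) :=
      path_succ_succ 3
    refine ⟨?_, ?_⟩
    · show indepPoly (SimpleGraph.pathGraph 4) =
        indepPoly (SimpleGraph.pathGraph 1) * indepPoly (SimpleGraph.pathGraph 2) +
          X * (indepPoly (SimpleGraph.pathGraph 1) * indepPoly (SimpleGraph.pathGraph 0))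
      rw [h4, h3, h2, path_zero, path_one]
      ring
    · show indepPoly (SimpleGraph.pathGraph 5) =
        indepPoly (SimpleGraph.pathGraph 2) ^ 2 + X * indepPoly (SimpleGraph.pathGraph 1) ^ 2
      rw [h5, h4, h3, h2, path_zero, path_one]
      ring
  | succ k ih =>
    obtain ⟨ihA, ihB⟩ := ih
    have hk2 := path_succ_succ k
    have hk3 : indepPoly (SimpleGraph.pathGraph (k + 3)) =
        indepPoly (SimpleGraph.pathGraph (k + 2)) + X * indepPoly (SimpleGraph.pathGraph (k + 1)) := by
      have := path_succ_succ (k + 1)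
      rwa [show k + 1 + 2 = k + 3 by omega, show k + 1 + 1 = k + 2 by omega] at this
    constructor
    · have h := path_succ_succ (2 * k + 4)
      rw [show 2 * (k + 1) + 4 = 2 * k + 4 + 2 by ring, h,
        show 2 * k + 4 + 1 = 2 * k + 5 by omega, ihA, ihB,
        show k + 1 + 1 = k + 2 by omega, show k + 1 + 2 = k + 3 by omega, hk3, hk2]
      ring
    · have h5 := path_succ_succ (2 * k + 5)
      have h4 := path_succ_succ (2 * k + 4)
      rw [show 2 * (k + 1) + 5 = 2 * k + 5 + 2 by ring, h5,
        show 2 * k + 5 + 1 = 2 * k + 4 + 2 by omega, h4,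
        show 2 * k + 4 + 1 = 2 * k + 5 by omega, ihA, ihB,
        show k + 1 + 1 = k + 2 by omega, show k + 1 + 2 = k + 3 by omega, hk3, hk2]
      ring

end IndepAux

/-- For `n ≥ 2`, `P_{2n}` is independence equivalent to `P_{n-1} ∪ C_{n+1}`. -/
theorem indepPoly_path_eq_path_mul_cycle (n : ℕ) (hn : 2 ≤ n) :
    indepPoly (SimpleGraph.pathGraph (2 * n)) =
      indepPoly (SimpleGraph.pathGraph (n - 1)) * indepPoly (SimpleGraph.cycleGraph (n + 1)) := by
  obtain ⟨m, rfl⟩ : ∃ m, n = m + 2 := ⟨n - 2, by omega⟩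
  rw [show 2 * (m + 2) = 2 * m + 4 by ring, show m + 2 - 1 = m + 1 by omega,
    show m + 2 + 1 = m + 3 by omega, IndepAux.cycle_eq m, (IndepAux.key m).1]
  ring
end

section
/- For n ≥ 4, the cycle C_n and the graph D_n (obtained from a path on n-1 vertices by adding one vertex adjacent to both endpoints of one terminal edge, i.e., a triangle with a path of length n-3 attached at one of its vertices) have the same independence polynomial. -/
open Polynomial

/-- The graph `D_n` on `n` vertices: the path on vertices `0, …, n-2` together with an
extra vertex `n-1` adjacent to both endpoints `0` and `1` of a terminal edge of the path,
i.e. a triangle with a path attached at one of its vertices. -/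
def graphD (n : ℕ) : SimpleGraph (Fin n) :=
  SimpleGraph.fromEdgeSet
    {e | ∃ x y : Fin n, e = s(x, y) ∧
      ((x.val + 1 = y.val ∧ y.val < n - 1) ∨ (x.val = n - 1 ∧ y.val ≤ 1))}

private lemma fin_succ_val {m : ℕ} (b : Fin (m+4)) (hb : b.val ≠ m+3) :
    ((b + 1 : Fin (m+4)) : ℕ) = b.val + 1 := by
  rw [Fin.val_add_one]
  have h : b ≠ Fin.last (m+3) := by
    intro h; apply hb; rw [h]; rfl
  simp [h]

private lemma fin_pred_val {m : ℕ} (b : Fin (m+4)) (hb : b.val ≠ 0) :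
    ((b - 1 : Fin (m+4)) : ℕ) = b.val - 1 := by
  rw [Fin.coe_sub_one]
  have h : b ≠ 0 := by intro h; apply hb; rw [h]; rfl
  simp [h]

private lemma fin_eq_succ_iff {m : ℕ} (a b : Fin (m+4)) :
    a = b + 1 ↔ (b.val + 1 = a.val ∨ (b.val = m+3 ∧ a.val = 0)) := by
  rw [Fin.ext_iff, Fin.val_add_one]
  by_cases h : b = Fin.last (m+3)
  · have hv : b.val = m+3 := by rw [h]; rfl
    simp only [h, if_pos]
    omega
  · have hv : b.val ≠ m+3 := by
      intro hv; exact h (Fin.val_injective (by simpa using hv))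
    simp only [h, if_neg, ite_false]
    omega

private lemma cyc_adj_iff {m : ℕ} (u v : Fin (m+4)) :
    (SimpleGraph.cycleGraph (m+4)).Adj u v ↔
      (u.val + 1 = v.val ∨ v.val + 1 = u.val ∨ (u.val = 0 ∧ v.val = m+3) ∨
        (v.val = 0 ∧ u.val = m+3)) := by
  rw [SimpleGraph.cycleGraph_adj']
  have hv1 : ((1 : Fin (m+4)) : ℕ) = 1 := by
    rw [Fin.val_one']; exact Nat.mod_eq_of_lt (by omega)
  have key : ∀ a b : Fin (m+4), ((a - b : Fin (m+4)) : ℕ) = 1 ↔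
      (b.val + 1 = a.val ∨ (b.val = m+3 ∧ a.val = 0)) := by
    intro a b
    have h0 : ((a - b : Fin (m+4)) : ℕ) = 1 ↔ a - b = 1 := by
      rw [Fin.ext_iff, hv1]
    rw [h0, sub_eq_iff_eq_add, add_comm 1 b, fin_eq_succ_iff]
  rw [key, key]
  tauto

private lemma D_adj_iff {m : ℕ} (u v : Fin (m+4)) :
    (graphD (m+4)).Adj u v ↔ u.val ≠ v.val ∧
      (((u.val + 1 = v.val ∧ v.val < m+3) ∨ (u.val = m+3 ∧ v.val ≤ 1)) ∨
       ((v.val + 1 = u.val ∧ u.val < m+3) ∨ (v.val = m+3 ∧ u.val ≤ 1))) := by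
  have hsub : m + 4 - 1 = m + 3 := by omega
  simp only [graphD, SimpleGraph.fromEdgeSet_adj, Set.mem_setOf_eq, hsub]
  constructor
  · rintro ⟨⟨x, y, hxy, hc⟩, hne⟩
    rw [Sym2.eq_iff] at hxy
    refine ⟨fun h => hne (Fin.val_injective h), ?_⟩
    rcases hxy with ⟨rfl, rfl⟩ | ⟨rfl, rfl⟩
    · exact Or.inl hc
    · exact Or.inr hc
  · rintro ⟨hne, h⟩
    refine ⟨?_, fun h' => hne (by rw [h'])⟩
    rcases h with h | h
    · exact ⟨u, v, rfl, h⟩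
    · exact ⟨v, u, Sym2.eq_swap, h⟩

private lemma mem_image_succ {m : ℕ} (T : Finset (Fin (m+4))) (x : Fin (m+4)) :
    x ∈ T.image (· + 1) ↔ x - 1 ∈ T := by
  simp only [Finset.mem_image]
  constructor
  · rintro ⟨a, ha, rfl⟩
    have : a + 1 - 1 = a := add_sub_cancel_right a 1
    rwa [this]
  · intro h
    exact ⟨x - 1, h, sub_add_cancel x 1⟩

private lemma mem_image_pred {m : ℕ} (T : Finset (Fin (m+4))) (x : Fin (m+4)) :
    x ∈ T.image (· - 1) ↔ x + 1 ∈ T := by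
  simp only [Finset.mem_image]
  constructor
  · rintro ⟨a, ha, rfl⟩
    have : a - 1 + 1 = a := sub_add_cancel a 1
    rwa [this]
  · intro h
    exact ⟨x + 1, h, add_sub_cancel_right x 1⟩

private lemma cyc_bounds {m : ℕ} {S : Finset (Fin (m+4))} {L : Fin (m+4)}
    (hLv : L.val = m+3)
    (hS : ∀ u ∈ S, ∀ v ∈ S, ¬ (SimpleGraph.cycleGraph (m+4)).Adj u v)
    (hL : L ∈ S) :
    ∀ b ∈ S, b.val ≠ m+3 → 1 ≤ b.val ∧ b.val ≤ m+1 := by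
  intro b hb hbv
  have h := hS L hL b hb
  rw [cyc_adj_iff] at h
  have hlt := b.isLt
  omega

private lemma D_bounds {m : ℕ} {S : Finset (Fin (m+4))} {L : Fin (m+4)}
    (hLv : L.val = m+3)
    (hS : ∀ u ∈ S, ∀ v ∈ S, ¬ (graphD (m+4)).Adj u v)
    (hL : L ∈ S) :
    ∀ b ∈ S, b.val ≠ m+3 → 2 ≤ b.val ∧ b.val ≤ m+2 := by
  intro b hb hbv
  have h := hS L hL b hb
  rw [D_adj_iff] at h
  have hlt := b.isLt
  omega

/-- For `n ≥ 4`, the cycle `C_n` and the graph `D_n` have the same independence polynomial. -/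
theorem indepPoly_cycle_eq_graphD (n : ℕ) (hn : 4 ≤ n) :
    indepPoly (SimpleGraph.cycleGraph n) = indepPoly (graphD n) := by
  obtain ⟨m, rfl⟩ : ∃ m, n = m + 4 := ⟨n - 4, by omega⟩
  classical
  set L : Fin (m+4) := ⟨m+3, by omega⟩ with hLdef
  have hLval : L.val = m+3 := rfl
  -- key structural facts
  have ne_of_val : ∀ b : Fin (m+4), b ≠ L → b.val ≠ m+3 := by
    intro b hb hv
    exact hb (Fin.val_injective (by rw [hv, hLval]))
  unfold indepPoly
  refine Finset.sum_nbij'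
    (fun S => if L ∈ S then insert L ((S.erase L).image (· + 1)) else S)
    (fun S => if L ∈ S then insert L ((S.erase L).image (· - 1)) else S)
    ?_ ?_ ?_ ?_ ?_
  · -- forward: cycle-independent ↦ D-independent
    intro S hS
    simp only [Finset.mem_filter, Finset.mem_univ, true_and] at hS ⊢
    by_cases hL : L ∈ S
    · rw [if_pos hL]
      have bounds := cyc_bounds hLval hS hL
      intro u hu v hv
      rw [Finset.mem_insert] at hu hv
      rw [D_adj_iff]
      rcases hu with rfl | hu
      · rcases hv with rfl | hv
        · omega
        · obtain ⟨b, hb, rfl⟩ := Finset.mem_image.mp hv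
          have hbS : b ∈ S := Finset.mem_of_mem_erase hb
          have hbv : b.val ≠ m+3 := ne_of_val b (Finset.ne_of_mem_erase hb)
          have hbd := bounds b hbS hbv
          rw [fin_succ_val b (by omega)]
          omega
      · obtain ⟨a, ha, rfl⟩ := Finset.mem_image.mp hu
        have haS : a ∈ S := Finset.mem_of_mem_erase ha
        have hav : a.val ≠ m+3 := ne_of_val a (Finset.ne_of_mem_erase ha)
        have had := bounds a haS hav
        rw [fin_succ_val a (by omega)]
        rcases hv with rfl | hv
        · omega
        · obtain ⟨b, hb, rfl⟩ := Finset.mem_image.mp hv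
          have hbS : b ∈ S := Finset.mem_of_mem_erase hb
          have hbv : b.val ≠ m+3 := ne_of_val b (Finset.ne_of_mem_erase hb)
          have hbd := bounds b hbS hbv
          rw [fin_succ_val b (by omega)]
          have h := hS a haS b hbS
          rw [cyc_adj_iff] at h
          omega
    · rw [if_neg hL]
      intro u hu v hv
      have huv : u.val ≠ m+3 := ne_of_val u (fun h => hL (h ▸ hu))
      have hvv : v.val ≠ m+3 := ne_of_val v (fun h => hL (h ▸ hv))
      have h := hS u hu v hv
      rw [cyc_adj_iff] at h
      rw [D_adj_iff]
      omega
  · -- backward: D-independent ↦ cycle-independent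
    intro T hT
    simp only [Finset.mem_filter, Finset.mem_univ, true_and] at hT ⊢
    by_cases hL : L ∈ T
    · rw [if_pos hL]
      have bounds := D_bounds hLval hT hL
      intro u hu v hv
      rw [Finset.mem_insert] at hu hv
      rw [cyc_adj_iff]
      rcases hu with rfl | hu
      · rcases hv with rfl | hv
        · omega
        · obtain ⟨b, hb, rfl⟩ := Finset.mem_image.mp hv
          have hbS : b ∈ T := Finset.mem_of_mem_erase hb
          have hbv : b.val ≠ m+3 := ne_of_val b (Finset.ne_of_mem_erase hb)
          have hbd := bounds b hbS hbv
          rw [fin_pred_val b (by omega)]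
          omega
      · obtain ⟨a, ha, rfl⟩ := Finset.mem_image.mp hu
        have haS : a ∈ T := Finset.mem_of_mem_erase ha
        have hav : a.val ≠ m+3 := ne_of_val a (Finset.ne_of_mem_erase ha)
        have had := bounds a haS hav
        rw [fin_pred_val a (by omega)]
        rcases hv with rfl | hv
        · omega
        · obtain ⟨b, hb, rfl⟩ := Finset.mem_image.mp hv
          have hbS : b ∈ T := Finset.mem_of_mem_erase hb
          have hbv : b.val ≠ m+3 := ne_of_val b (Finset.ne_of_mem_erase hb)
          have hbd := bounds b hbS hbv
          rw [fin_pred_val b (by omega)]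
          have h := hT a haS b hbS
          rw [D_adj_iff] at h
          omega
    · rw [if_neg hL]
      intro u hu v hv
      have huv : u.val ≠ m+3 := ne_of_val u (fun h => hL (h ▸ hu))
      have hvv : v.val ≠ m+3 := ne_of_val v (fun h => hL (h ▸ hv))
      have h := hT u hu v hv
      rw [D_adj_iff] at h
      rw [cyc_adj_iff]
      omega
  · -- left inverse
    intro S hS
    simp only [Finset.mem_filter, Finset.mem_univ, true_and] at hS
    by_cases hL : L ∈ S
    · have bounds := cyc_bounds hLval hS hL
      rw [if_pos hL, if_pos (Finset.mem_insert_self _ _)]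
      have hLE : L ∉ (S.erase L).image (· + 1) := by
        rw [mem_image_succ]
        intro h
        have h1 : L - 1 ∈ S := Finset.mem_of_mem_erase h
        have hv : ((L - 1 : Fin (m+4)) : ℕ) = m + 2 := by
          rw [fin_pred_val L (by omega), hLval]; omega
        have := bounds _ h1 (by omega)
        omega
      rw [Finset.erase_insert hLE, Finset.image_image]
      have hcomp : ((· - 1) ∘ (· + 1) : Fin (m+4) → Fin (m+4)) = id := by
        funext x
        show x + 1 - 1 = x
        exact add_sub_cancel_right x 1
      rw [hcomp, Finset.image_id, Finset.insert_erase hL]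
    · rw [if_neg hL, if_neg hL]
  · -- right inverse
    intro T hT
    simp only [Finset.mem_filter, Finset.mem_univ, true_and] at hT
    by_cases hL : L ∈ T
    · have bounds := D_bounds hLval hT hL
      rw [if_pos hL, if_pos (Finset.mem_insert_self _ _)]
      have hLE : L ∉ (T.erase L).image (· - 1) := by
        rw [mem_image_pred]
        intro h
        have h1 : L + 1 ∈ T := Finset.mem_of_mem_erase h
        have hv : ((L + 1 : Fin (m+4)) : ℕ) = 0 := by
          rw [Fin.val_add_one]
          have : L = Fin.last (m+3) := rfl
          simp [this]
        have := bounds _ h1 (by omega)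
        omega
      rw [Finset.erase_insert hLE, Finset.image_image]
      have hcomp : ((· + 1) ∘ (· - 1) : Fin (m+4) → Fin (m+4)) = id := by
        funext x
        show x - 1 + 1 = x
        exact sub_add_cancel x 1
      rw [hcomp, Finset.image_id, Finset.insert_erase hL]
    · rw [if_neg hL, if_neg hL]
  · -- cardinalities agree
    intro S hS
    simp only [Finset.mem_filter, Finset.mem_univ, true_and] at hS
    by_cases hL : L ∈ S
    · have bounds := cyc_bounds hLval hS hL
      rw [if_pos hL]
      have hLE : L ∉ (S.erase L).image (· + 1) := by
        rw [mem_image_succ]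
        intro h
        have h1 : L - 1 ∈ S := Finset.mem_of_mem_erase h
        have hv : ((L - 1 : Fin (m+4)) : ℕ) = m + 2 := by
          rw [fin_pred_val L (by omega), hLval]; omega
        have := bounds _ h1 (by omega)
        omega
      rw [Finset.card_insert_of_notMem hLE,
        Finset.card_image_of_injective _ (add_left_injective (1 : Fin (m+4)))]
      have h1 := Finset.card_erase_of_mem hL
      have h2 : 0 < S.card := Finset.card_pos.mpr ⟨L, hL⟩
      congr 1
      omega
    · rw [if_neg hL]
end

section
/- For every n ≥ 3, the value of the independence polynomial of the cycle C_n at x = -1/4 equals 1/2^{n-1}. -/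
open Polynomial

section AuxTransferMatrix


open Finset

variable {α : Type*} [Fintype α] [DecidableEq α]

theorem pathSum (M : Matrix α α ℝ) : ∀ (k : ℕ) (a b : α),
    (M ^ (k + 1)) a b =
      ∑ g : Fin k → α, ∏ i : Fin (k + 1),
        M ((Fin.cons a (Fin.snoc g b) : Fin (k + 2) → α) i.castSucc)
          ((Fin.cons a (Fin.snoc g b) : Fin (k + 2) → α) i.succ) := by
  intro k
  induction k with
  | zero =>
    intro a b
    rw [pow_one]
    simp [Fin.prod_univ_one, Fin.snoc, Fin.cons]
  | succ k ih =>
    intro a b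
    rw [pow_succ, Matrix.mul_apply]
    have e : ∀ c : α, (M ^ (k+1)) a c * M c b =
        ∑ g : Fin k → α, (∏ i : Fin (k + 1),
          M ((Fin.cons a (Fin.snoc g c) : Fin (k + 2) → α) i.castSucc)
            ((Fin.cons a (Fin.snoc g c) : Fin (k + 2) → α) i.succ)) * M c b := by
      intro c; rw [ih a c, Finset.sum_mul]
    rw [Finset.sum_congr rfl (fun c _ => e c)]
    rw [← Equiv.sum_comp (Fin.snocEquiv (fun _ : Fin (k+1) => α))]
    rw [Fintype.sum_prod_type]
    apply Finset.sum_congr rfl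
    intro c _
    apply Finset.sum_congr rfl
    intro g _
    -- goal: (∏ i : Fin (k+1), ...cons a (snoc g c)...) * M c b
    --     = ∏ i : Fin (k+2), ...cons a (snoc (snoc g c) b)...
    show (∏ i : Fin (k + 1),
          M ((Fin.cons a (Fin.snoc g c) : Fin (k + 2) → α) i.castSucc)
            ((Fin.cons a (Fin.snoc g c) : Fin (k + 2) → α) i.succ)) * M c b =
        ∏ i : Fin (k + 2),
          M ((Fin.cons a (Fin.snoc (Fin.snoc g c) b) : Fin (k + 3) → α) i.castSucc)
            ((Fin.cons a (Fin.snoc (Fin.snoc g c) b) : Fin (k + 3) → α) i.succ)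
    conv_rhs => rw [Fin.prod_univ_castSucc]
    have hch : ∀ j : Fin (k+2),
        (Fin.cons a (Fin.snoc (Fin.snoc g c) b) : Fin (k+3) → α) j.castSucc =
        (Fin.cons a (Fin.snoc g c) : Fin (k+2) → α) j := by
      intro j
      refine Fin.cases ?_ ?_ j
      · rfl
      · intro j'
        rw [← Fin.succ_castSucc, Fin.cons_succ, Fin.cons_succ, Fin.snoc_castSucc]
    congr 1
    · apply Finset.prod_congr rfl
      intro i _
      rw [hch i.castSucc, Fin.succ_castSucc, hch i.succ]
    · rw [hch (Fin.last (k+1)), ← Fin.succ_last, Fin.cons_succ, Fin.snoc_last,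
        Fin.succ_last, ← Fin.succ_last, Fin.cons_succ,
        show (Fin.last k).succ = Fin.last (k+1) from Fin.succ_last k, Fin.snoc_last]

theorem cyclicSum (M : Matrix α α ℝ) (n : ℕ) :
    ∑ f : Fin (n+1) → α, ∏ i : Fin (n+1), M (f i) (f (i+1)) = (M ^ (n+1)).trace := by
  rw [Matrix.trace]
  rw [← Equiv.sum_comp (Fin.consEquiv (fun _ : Fin (n+1) => α))]
  rw [Fintype.sum_prod_type]
  apply Finset.sum_congr rfl
  intro a _
  rw [Matrix.diag_apply, pathSum M n a a]
  apply Finset.sum_congr rfl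
  intro g _
  show ∏ i : Fin (n+1), M ((Fin.cons a g : Fin (n+1) → α) i) ((Fin.cons a g : Fin (n+1) → α) (i+1))
      = _
  apply Finset.prod_congr rfl
  intro i _
  have hA : ∀ j : Fin (n+1),
      (Fin.cons a (Fin.snoc g a) : Fin (n+2) → α) j.castSucc = (Fin.cons a g : Fin (n+1) → α) j := by
    intro j
    refine Fin.cases ?_ ?_ j
    · rfl
    · intro j'
      rw [← Fin.succ_castSucc, Fin.cons_succ, Fin.cons_succ, Fin.snoc_castSucc]
  have hB : (Fin.cons a (Fin.snoc g a) : Fin (n+2) → α) i.succ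
      = (Fin.cons a g : Fin (n+1) → α) (i+1) := by
    by_cases h : i = Fin.last n
    · subst h
      rw [Fin.succ_last, ← Fin.succ_last, Fin.cons_succ, Fin.snoc_last, Fin.last_add_one,
        Fin.cons_zero]
    · have hv : i.val < n := lt_of_le_of_ne (Nat.lt_succ_iff.mp i.isLt) (by
        intro hh; exact h (Fin.ext hh))
      have : i.succ = (i + 1).castSucc := by
        apply Fin.ext
        simp [Fin.val_add_one, h]
      rw [this, hA (i+1)]
  rw [hA i, hB]

noncomputable def Mx : Matrix Bool Bool ℝ :=
  Matrix.of fun a b => match a, b with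
    | false, _ => 1
    | true, false => -(1/4)
    | true, true => 0

noncomputable def Ak (k : ℕ) : Matrix Bool Bool ℝ :=
  Matrix.of fun a b => match a, b with
    | false, false => (1 + (k:ℝ)) * (1/2)^k
    | false, true => 2 * (k:ℝ) * (1/2)^k
    | true, false => -((k:ℝ)/2) * (1/2)^k
    | true, true => (1 - (k:ℝ)) * (1/2)^k

theorem Mx_pow (k : ℕ) : Mx ^ k = Ak k := by
  induction k with
  | zero =>
    ext a b
    cases a <;> cases b <;> simp [Ak, Matrix.one_apply]
  | succ k ih =>
    rw [pow_succ, ih]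
    ext a b
    rw [Matrix.mul_apply]
    cases a <;> cases b <;>
      simp [Ak, Mx, Fintype.sum_bool] <;> ring

theorem Mx_trace (k : ℕ) : (Mx ^ k).trace = 2 * (1/2)^k := by
  rw [Mx_pow, Matrix.trace, Fintype.sum_bool]
  simp [Ak, Matrix.diag_apply]
  ring

def boolEquiv {β : Type*} [Fintype β] [DecidableEq β] : (β → Bool) ≃ Finset β where
  toFun f := Finset.univ.filter (fun i => f i = true)
  invFun s i := decide (i ∈ s)
  left_inv f := by funext i; simp
  right_inv s := by ext i; simp

open scoped Classical in
theorem perSet (m : ℕ) (s : Finset (Fin (m+3))) :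
    (∏ i : Fin (m+3), Mx (decide (i ∈ s)) (decide ((i+1) ∈ s))) =
      if (∀ u ∈ s, ∀ v ∈ s, ¬ (SimpleGraph.cycleGraph (m+3)).Adj u v)
        then (-(1/4) : ℝ) ^ s.card else 0 := by
  by_cases hind : ∀ u ∈ s, ∀ v ∈ s, ¬ (SimpleGraph.cycleGraph (m+3)).Adj u v
  · rw [if_pos hind]
    have step : ∀ i : Fin (m+3), Mx (decide (i ∈ s)) (decide ((i+1) ∈ s)) =
        if i ∈ s then (-(1/4) : ℝ) else 1 := by
      intro i
      by_cases hi : i ∈ s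
      · have h2 : (i+1) ∉ s := by
          intro h2
          refine hind i hi (i+1) h2 (SimpleGraph.cycleGraph_adj.mpr (Or.inr ?_))
          exact add_sub_cancel_left i 1
        simp [Mx, hi, h2]
      · simp [Mx, hi]
    rw [Finset.prod_congr rfl (fun i _ => step i), Finset.prod_ite_mem,
      Finset.univ_inter, Finset.prod_const]
  · rw [if_neg hind]
    push_neg at hind
    obtain ⟨u, hu, v, hv, hadj⟩ := hind
    rcases SimpleGraph.cycleGraph_adj.mp hadj with h | h
    · -- u - v = 1, so u = v + 1
      have hvu : u = v + 1 := sub_eq_iff_eq_add'.mp h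
      refine Finset.prod_eq_zero (Finset.mem_univ v) ?_
      rw [← hvu]
      simp [Mx, hu, hv]
    · -- v - u = 1, so v = u + 1
      have hvu : v = u + 1 := sub_eq_iff_eq_add'.mp h
      refine Finset.prod_eq_zero (Finset.mem_univ u) ?_
      rw [← hvu]
      simp [Mx, hu, hv]

end AuxTransferMatrix

/-- `I(C_n, -1/4) = 1/2^{n-1}` for `n ≥ 3`. -/
theorem indepPoly_cycle_eval_neg_quarter (n : ℕ) (hn : 3 ≤ n) :
    (indepPoly (SimpleGraph.cycleGraph n)).eval (-(1 / 4)) = 1 / 2 ^ (n - 1) := by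
  classical
  obtain ⟨m, rfl⟩ : ∃ m, n = m + 3 := ⟨n - 3, by omega⟩
  have h1 : (indepPoly (SimpleGraph.cycleGraph (m+3))).eval (-(1 / 4)) =
      ∑ s ∈ Finset.univ.filter
        (fun s : Finset (Fin (m+3)) => ∀ u ∈ s, ∀ v ∈ s, ¬ (SimpleGraph.cycleGraph (m+3)).Adj u v),
        (-(1/4) : ℝ) ^ s.card := by
    rw [indepPoly, Polynomial.eval_finset_sum]
    simp only [Polynomial.eval_pow, Polynomial.eval_X]
    exact Finset.sum_congr (Finset.filter_congr_decidable _ _ _) fun _ _ => rfl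
  rw [h1, Finset.sum_filter]
  have h2 : ∑ s : Finset (Fin (m+3)),
      (if (∀ u ∈ s, ∀ v ∈ s, ¬ (SimpleGraph.cycleGraph (m+3)).Adj u v)
        then (-(1/4) : ℝ) ^ s.card else 0) =
      ∑ f : Fin (m+3) → Bool, ∏ i : Fin (m+3), Mx (f i) (f (i+1)) := by
    rw [← Equiv.sum_comp (boolEquiv (β := Fin (m+3)))]
    apply Finset.sum_congr rfl
    intro f _
    rw [← perSet m (boolEquiv f)]
    apply Finset.prod_congr rfl
    intro i _
    have hmem : ∀ j : Fin (m+3), decide (j ∈ boolEquiv f) = f j := by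
      intro j; simp [boolEquiv]
    rw [hmem i, hmem (i+1)]
  rw [h2, cyclicSum Mx (m+2), Mx_trace]
  rw [show m + 3 - 1 = m + 2 from rfl]
  rw [pow_succ]
  rw [one_div, one_div]
  field_simp
  ring_nf
  rw [← mul_pow]
  norm_num
end

section
/- For n ≥ 1, the roots of the independence polynomial of the cycle C_n are exactly the numbers -1/(2 + 2cos((2i-1)π/n)) for i = 1, ..., ⌊n/2⌋. -/
open Polynomial Finset

namespace IndepAux

def emb (m n k : ℕ) (h : m + k ≤ n) : Fin m ↪ Fin n :=
  ⟨fun i => ⟨i.val + k, by omega⟩, fun a b hab => by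
    simp only [Fin.mk.injEq] at hab
    exact Fin.ext (by omega)⟩

@[simp] lemma emb_val {m n k : ℕ} (h : m + k ≤ n) (i : Fin m) :
    (emb m n k h i).val = i.val + k := rfl

def pathOk {m : ℕ} (s : Finset (Fin m)) : Prop :=
  ∀ i ∈ s, ∀ j ∈ s, (i : ℕ) + 1 ≠ (j : ℕ)

instance {m : ℕ} : DecidablePred (pathOk (m := m)) := fun s => by
  unfold pathOk; infer_instance

noncomputable def pfun (x : ℝ) (m : ℕ) : ℝ :=
  ∑ s ∈ univ.filter (fun s : Finset (Fin m) => pathOk s), x ^ s.card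

lemma sum_image_map {α β : Type*} [DecidableEq α] [DecidableEq β] (e : α ↪ β)
    (t : Finset (Finset α)) (x : ℝ) :
    ∑ s ∈ t.image (Finset.map e), x ^ s.card = ∑ s ∈ t, x ^ s.card := by
  rw [Finset.sum_image (fun a _ b _ h => Finset.map_injective e h)]
  simp

lemma pfun_zero (x : ℝ) : pfun x 0 = 1 := by
  have h : (univ.filter (fun s : Finset (Fin 0) => pathOk s)) = {∅} := by decide
  rw [pfun, h]; simp

lemma pfun_one (x : ℝ) : pfun x 1 = 1 + x := by
  have h : (univ.filter (fun s : Finset (Fin 1) => pathOk s)) = {∅, {0}} := by decide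
  rw [pfun, h]
  rw [Finset.sum_insert (by decide)]
  simp

end IndepAux

namespace IndepAux2
open IndepAux

variable {M N : ℕ}

lemma sum_filter_eq (x : ℝ) (P : Finset (Fin N) → Prop) [DecidablePred P] (e : Fin M ↪ Fin N)
    (h1 : ∀ t, pathOk t → P (t.map e))
    (h2 : ∀ s, P s → s ⊆ univ.map e)
    (h3 : ∀ t, P (t.map e) → pathOk t) :
    ∑ s ∈ univ.filter P, x ^ s.card = pfun x M := by
  classical
  have hset : univ.filter P = (univ.filter (fun t => pathOk t)).image (Finset.map e) := by
    ext s
    simp only [mem_filter, mem_univ, true_and, mem_image]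
    constructor
    · intro hP
      obtain ⟨u, -, rfl⟩ := Finset.subset_map_iff.mp (h2 s hP)
      exact ⟨u, h3 u hP, rfl⟩
    · rintro ⟨t, ht, rfl⟩
      exact h1 t ht
  rw [hset, sum_image_map, pfun]

lemma sum_filter_insert_eq (x : ℝ) (P : Finset (Fin N) → Prop) [DecidablePred P]
    (v : Fin N) (e : Fin M ↪ Fin N) (hv : ∀ t : Finset (Fin M), v ∉ t.map e)
    (h1 : ∀ t, pathOk t → P (insert v (t.map e)))
    (h2 : ∀ s, P s → v ∈ s ∧ s.erase v ⊆ univ.map e)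
    (h3 : ∀ t, P (insert v (t.map e)) → pathOk t) :
    ∑ s ∈ univ.filter P, x ^ s.card = x * pfun x M := by
  classical
  have hset : univ.filter P
      = (univ.filter (fun t => pathOk t)).image (fun t => insert v (Finset.map e t)) := by
    ext s
    simp only [mem_filter, mem_univ, true_and, mem_image]
    constructor
    · intro hP
      obtain ⟨hvs, hsub⟩ := h2 s hP
      obtain ⟨u, -, hu⟩ := Finset.subset_map_iff.mp hsub
      have hs : s = insert v (u.map e) := by
        rw [← hu, Finset.insert_erase hvs]
      exact ⟨u, h3 u (hs ▸ hP), hs.symm⟩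
    · rintro ⟨t, ht, rfl⟩
      exact h1 t ht
  rw [hset, Finset.sum_image]
  · rw [pfun, Finset.mul_sum]
    refine Finset.sum_congr rfl fun t _ => ?_
    rw [Finset.card_insert_of_notMem (hv t), Finset.card_map, pow_succ, mul_comm]
  · intro a _ b _ hab
    have : (insert v (a.map e)).erase v = (insert v (b.map e)).erase v := by
      rw [show insert v (a.map e) = insert v (b.map e) from hab]
    rw [Finset.erase_insert (hv a), Finset.erase_insert (hv b)] at this
    exact Finset.map_injective e this

end IndepAux2

namespace IndepAux
variable {m n k : ℕ}

lemma mem_map_emb {h : m + k ≤ n} {t : Finset (Fin m)} {a : Fin n} :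
    a ∈ t.map (emb m n k h) ↔ ∃ b ∈ t, (b : ℕ) + k = (a : ℕ) := by
  simp [Finset.mem_map, emb, Fin.ext_iff]
  exact Iff.rfl

lemma mem_univ_map_emb {h : m + k ≤ n} {a : Fin n} :
    a ∈ (univ : Finset (Fin m)).map (emb m n k h) ↔ k ≤ (a : ℕ) ∧ (a : ℕ) < m + k := by
  rw [mem_map_emb]
  constructor
  · rintro ⟨b, -, hb⟩; omega
  · rintro ⟨h1, h2⟩; exact ⟨⟨(a : ℕ) - k, by omega⟩, Finset.mem_univ _, by simp; omega⟩

lemma pathOk_map {h : m + k ≤ n} {t : Finset (Fin m)} :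
    pathOk (t.map (emb m n k h)) ↔ pathOk t := by
  constructor
  · intro hp i hi j hj hc
    exact hp _ (Finset.mem_map_of_mem _ hi) _ (Finset.mem_map_of_mem _ hj) (by simp; omega)
  · intro hp a ha b hb hc
    rw [mem_map_emb] at ha hb
    obtain ⟨i, hi, hik⟩ := ha
    obtain ⟨j, hj, hjk⟩ := hb
    exact hp i hi j hj (by omega)

lemma pfun_rec (x : ℝ) (m : ℕ) : pfun x (m + 2) = pfun x (m + 1) + x * pfun x m := by
  classical
  have hsplit := Finset.sum_filter_add_sum_filter_not
    (univ.filter (fun s : Finset (Fin (m + 2)) => pathOk s))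
    (fun s => Fin.last (m + 1) ∈ s) (fun s => x ^ s.card)
  rw [Finset.filter_filter, Finset.filter_filter] at hsplit
  have h2 : ∑ s ∈ univ.filter (fun s : Finset (Fin (m + 2)) =>
      pathOk s ∧ Fin.last (m + 1) ∉ s), x ^ s.card = pfun x (m + 1) := by
    apply IndepAux2.sum_filter_eq x _ (emb (m + 1) (m + 2) 0 (by omega))
    · intro t ht
      refine ⟨pathOk_map.mpr ht, ?_⟩
      rw [mem_map_emb]
      rintro ⟨b, -, hb⟩
      have := b.isLt
      simp [Fin.val_last] at hb
      omega
    · rintro s ⟨-, hlast⟩ a ha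
      rw [mem_univ_map_emb]
      have : (a : ℕ) ≠ m + 1 := fun hc => hlast (by rwa [show a = Fin.last (m+1) from Fin.ext hc] at ha)
      have := a.isLt
      omega
    · exact fun t ht => pathOk_map.mp ht.1
  have h3 : ∑ s ∈ univ.filter (fun s : Finset (Fin (m + 2)) =>
      pathOk s ∧ Fin.last (m + 1) ∈ s), x ^ s.card = x * pfun x m := by
    apply IndepAux2.sum_filter_insert_eq x _ (Fin.last (m + 1)) (emb m (m + 2) 0 (by omega))
    · intro t
      rw [mem_map_emb]
      rintro ⟨b, -, hb⟩
      have := b.isLt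
      simp [Fin.val_last] at hb
      omega
    · intro t ht
      constructor
      · intro a ha b hb hc
        rw [Finset.mem_insert, mem_map_emb] at ha hb
        rcases ha with rfl | ⟨i, hi, hik⟩ <;> rcases hb with rfl | ⟨j, hj, hjk⟩
        · simp [Fin.val_last] at hc
        · have := j.isLt; simp [Fin.val_last] at hc; omega
        · have := i.isLt; simp [Fin.val_last] at hc; omega
        · exact ht i hi j hj (by omega)
      · exact Finset.mem_insert_self _ _
    · rintro s ⟨hp, hlast⟩
      refine ⟨hlast, fun a ha => ?_⟩
      rw [Finset.mem_erase] at ha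
      rw [mem_univ_map_emb]
      have hne : (a : ℕ) ≠ m + 1 := fun hc => ha.1 (Fin.ext (by simp [Fin.val_last, hc]))
      have hnm : (a : ℕ) ≠ m := by
        intro hc
        exact hp a ha.2 (Fin.last (m + 1)) hlast (by simp [Fin.val_last]; omega)
      have := a.isLt
      omega
    · intro t ht i hi j hj hc
      exact ht.1 _ (Finset.mem_insert_of_mem (Finset.mem_map_of_mem _ hi))
        _ (Finset.mem_insert_of_mem (Finset.mem_map_of_mem _ hj)) (by simp; omega)
  rw [pfun, ← hsplit, h2, h3, add_comm]

end IndepAux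

namespace IndepAux

lemma sub_val_one {n : ℕ} (hn2 : 2 ≤ n) (a b : Fin n) :
    ((a - b : Fin n) : ℕ) = 1 ↔ ((a : ℕ) = (b : ℕ) + 1 ∨ ((b : ℕ) = n - 1 ∧ (a : ℕ) = 0)) := by
  have hn : 0 < n := a.pos
  have hs : ((a - b : Fin n) : ℕ) = ((a : ℕ) + (n - (b : ℕ))) % n := by
    rw [Fin.sub_def]
    simp [Nat.add_comm]
  have ha := a.isLt
  have hb := b.isLt
  rcases le_or_gt (b : ℕ) (a : ℕ) with hle | hlt
  · have : (a : ℕ) + (n - (b : ℕ)) = ((a : ℕ) - (b : ℕ)) + n := by omega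
    rw [this, Nat.add_mod_right, Nat.mod_eq_of_lt (by omega)] at hs
    rw [hs]; omega
  · rw [Nat.mod_eq_of_lt (by omega)] at hs
    rw [hs]; omega

lemma cyc_adj_iff {m : ℕ} (u v : Fin (m + 3)) :
    (SimpleGraph.cycleGraph (m + 3)).Adj u v ↔
      ((u : ℕ) = (v : ℕ) + 1 ∨ (v : ℕ) = (u : ℕ) + 1 ∨
        ((v : ℕ) = m + 2 ∧ (u : ℕ) = 0) ∨ ((u : ℕ) = m + 2 ∧ (v : ℕ) = 0)) := by
  rw [SimpleGraph.cycleGraph_adj', sub_val_one (by omega), sub_val_one (by omega)]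
  have : m + 3 - 1 = m + 2 := by omega
  rw [this]
  tauto

lemma cyc_sum (x : ℝ) (m : ℕ)
    [inst : DecidablePred (fun s : Finset (Fin (m + 3)) =>
      ∀ u ∈ s, ∀ v ∈ s, ¬ (SimpleGraph.cycleGraph (m + 3)).Adj u v)] :
    ∑ s ∈ univ.filter (fun s : Finset (Fin (m + 3)) =>
        ∀ u ∈ s, ∀ v ∈ s, ¬ (SimpleGraph.cycleGraph (m + 3)).Adj u v), x ^ s.card
      = pfun x (m + 2) + x * pfun x m := by
  classical
  set P : Finset (Fin (m + 3)) → Prop :=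
    fun s => ∀ u ∈ s, ∀ v ∈ s, ¬ (SimpleGraph.cycleGraph (m + 3)).Adj u v with hP
  have hsplit := Finset.sum_filter_add_sum_filter_not
    (univ.filter P) (fun s => (0 : Fin (m + 3)) ∈ s) (fun s => x ^ s.card)
  rw [Finset.filter_filter, Finset.filter_filter] at hsplit
  have h2 : ∑ s ∈ univ.filter (fun s => P s ∧ (0 : Fin (m + 3)) ∉ s), x ^ s.card
      = pfun x (m + 2) := by
    apply IndepAux2.sum_filter_eq x _ (emb (m + 2) (m + 3) 1 (by omega))
    · intro t ht
      constructor
      · intro a ha b hb hadj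
        rw [mem_map_emb] at ha hb
        obtain ⟨i, hi, hik⟩ := ha
        obtain ⟨j, hj, hjk⟩ := hb
        rw [cyc_adj_iff] at hadj
        have hi' := i.isLt
        have hj' := j.isLt
        rcases hadj with h | h | h | h
        · exact ht j hj i hi (by omega)
        · exact ht i hi j hj (by omega)
        · omega
        · omega
      · rw [mem_map_emb]
        rintro ⟨b, -, hb⟩
        simp at hb
    · rintro s ⟨-, h0⟩ a ha
      rw [mem_univ_map_emb]
      have : (a : ℕ) ≠ 0 := fun hc => h0 (by rwa [show a = 0 from Fin.ext hc] at ha)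
      have := a.isLt
      omega
    · intro t ht i hi j hj hc
      exact ht.1 _ (Finset.mem_map_of_mem _ hi) _ (Finset.mem_map_of_mem _ hj)
        ((cyc_adj_iff _ _).mpr (by simp; omega))
  have h3 : ∑ s ∈ univ.filter (fun s => P s ∧ (0 : Fin (m + 3)) ∈ s), x ^ s.card
      = x * pfun x m := by
    apply IndepAux2.sum_filter_insert_eq x _ (0 : Fin (m + 3)) (emb m (m + 3) 2 (by omega))
    · intro t h
      rw [mem_map_emb] at h
      obtain ⟨b, -, hb⟩ := h
      simp at hb
    · intro t ht
      refine ⟨?_, Finset.mem_insert_self _ _⟩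
      intro a ha b hb hadj
      rw [Finset.mem_insert, mem_map_emb] at ha hb
      rw [cyc_adj_iff] at hadj
      rcases ha with rfl | ⟨i, hi, hik⟩ <;> rcases hb with rfl | ⟨j, hj, hjk⟩
      · simp at hadj
      · have := j.isLt; simp at hadj; omega
      · have := i.isLt; simp at hadj; omega
      · have := i.isLt; have := j.isLt
        rcases hadj with h | h | h | h
        · exact ht j hj i hi (by omega)
        · exact ht i hi j hj (by omega)
        · omega
        · omega
    · rintro s ⟨hp, h0⟩
      refine ⟨h0, fun a ha => ?_⟩
      rw [Finset.mem_erase] at ha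
      rw [mem_univ_map_emb]
      have hne : (a : ℕ) ≠ 0 := fun hc => ha.1 (Fin.ext (by simpa using hc))
      have h1 : (a : ℕ) ≠ 1 := by
        intro hc
        exact hp a ha.2 0 h0 ((cyc_adj_iff _ _).mpr (by simp; omega))
      have h2 : (a : ℕ) ≠ m + 2 := by
        intro hc
        exact hp a ha.2 0 h0 ((cyc_adj_iff _ _).mpr (by simp; omega))
      have := a.isLt
      omega
    · intro t ht i hi j hj hc
      exact ht.1 _ (Finset.mem_insert_of_mem (Finset.mem_map_of_mem _ hi))
        _ (Finset.mem_insert_of_mem (Finset.mem_map_of_mem _ hj))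
        ((cyc_adj_iff _ _).mpr (by simp; omega))
  rw [Finset.filter_congr_decidable, ← hsplit, h2, h3, add_comm]

end IndepAux

namespace IndepAux

lemma pfun_pos_aux {x : ℝ} (hx : -(1/4) ≤ x) :
    ∀ m, 0 < pfun x m ∧ pfun x m < 2 * pfun x (m + 1) := by
  intro m
  induction m with
  | zero =>
    rw [pfun_zero, pfun_one]
    constructor <;> linarith
  | succ m ih =>
    obtain ⟨h1, h2⟩ := ih
    have hp1 : 0 < pfun x (m + 1) := by linarith
    refine ⟨hp1, ?_⟩
    rw [pfun_rec]
    nlinarith [mul_le_mul_of_nonneg_right hx (le_of_lt h1)]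

lemma cyc_pos {x : ℝ} (hx : -(1/4) ≤ x) (m : ℕ) :
    0 < pfun x (m + 2) + x * pfun x m := by
  obtain ⟨h0, h1⟩ := pfun_pos_aux hx m
  obtain ⟨h2, h3⟩ := pfun_pos_aux hx (m + 1)
  nlinarith [mul_le_mul_of_nonneg_right hx (le_of_lt h0)]

lemma pfun_trig {φ : ℝ} (hφ1 : 0 < φ) (hφ2 : φ < Real.pi / 2) :
    ∀ m : ℕ, pfun (-(1 / (4 * Real.cos φ ^ 2))) m
      = (1 / (2 * Real.cos φ)) ^ (m + 1) * Real.sin (((m : ℝ) + 2) * φ) / Real.sin φ := by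
  have hπ := Real.pi_pos
  have hc : 0 < Real.cos φ := Real.cos_pos_of_mem_Ioo ⟨by linarith, hφ2⟩
  have hs : 0 < Real.sin φ := Real.sin_pos_of_pos_of_lt_pi hφ1 (by linarith)
  have hc' : Real.cos φ ≠ 0 := hc.ne'
  have hs' : Real.sin φ ≠ 0 := hs.ne'
  have hsq : Real.sin φ ^ 2 + Real.cos φ ^ 2 = 1 := Real.sin_sq_add_cos_sq φ
  set x : ℝ := -(1 / (4 * Real.cos φ ^ 2)) with hxdef
  intro m
  induction m using Nat.twoStepInduction with
  | zero =>
    rw [pfun_zero]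
    have h2 : ((0 : ℕ) : ℝ) + 2 = 2 := by norm_num
    rw [h2, Real.sin_two_mul]
    field_simp
    ring_nf
    field_simp
  | one =>
    rw [pfun_one]
    have h3 : ((1 : ℕ) : ℝ) + 2 = 3 := by norm_num
    rw [h3, Real.sin_three_mul]
    have hfac : 3 * Real.sin φ - 4 * Real.sin φ ^ 3 = Real.sin φ * (4 * Real.cos φ ^ 2 - 1) := by
      linear_combination (-4 * Real.sin φ) * hsq
    rw [hfac, hxdef]
    field_simp
    ring_nf
    field_simp
  | more m ih2 ih1 =>
    rw [pfun_rec, ih1, ih2]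
    have key : Real.sin (((m : ℝ) + 2 + 2) * φ)
        = 2 * Real.cos φ * Real.sin (((m : ℝ) + 1 + 2) * φ) - Real.sin (((m : ℝ) + 2) * φ) := by
      have h1 := Real.sin_add (((m : ℝ) + 3) * φ) φ
      have h2 := Real.sin_sub (((m : ℝ) + 3) * φ) φ
      have e1 : ((m : ℝ) + 3) * φ + φ = ((m : ℝ) + 2 + 2) * φ := by ring
      have e2 : ((m : ℝ) + 3) * φ - φ = ((m : ℝ) + 2) * φ := by ring
      have e3 : ((m : ℝ) + 3) * φ = ((m : ℝ) + 1 + 2) * φ := by ring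
      rw [e1, e3] at h1
      rw [e2, e3] at h2
      linarith
    have hcast : ((m + 2 : ℕ) : ℝ) = (m : ℝ) + 2 := by push_cast; ring
    have hcast1 : ((m + 1 : ℕ) : ℝ) = (m : ℝ) + 1 := by push_cast; ring
    rw [hcast, hcast1, key, hxdef]
    field_simp
    ring_nf
    field_simp
    ring_nf
end IndepAux

namespace IndepAux

lemma cyc_trig {φ : ℝ} (hφ1 : 0 < φ) (hφ2 : φ < Real.pi / 2) (m : ℕ) :
    pfun (-(1 / (4 * Real.cos φ ^ 2))) (m + 2)
      + (-(1 / (4 * Real.cos φ ^ 2))) * pfun (-(1 / (4 * Real.cos φ ^ 2))) m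
      = 2 * (1 / (2 * Real.cos φ)) ^ (m + 3) * Real.cos (((m : ℝ) + 3) * φ) := by
  have hπ := Real.pi_pos
  have hc : 0 < Real.cos φ := Real.cos_pos_of_mem_Ioo ⟨by linarith, hφ2⟩
  have hs : 0 < Real.sin φ := Real.sin_pos_of_pos_of_lt_pi hφ1 (by linarith)
  have hc' : Real.cos φ ≠ 0 := hc.ne'
  have hs' : Real.sin φ ≠ 0 := hs.ne'
  rw [pfun_trig hφ1 hφ2, pfun_trig hφ1 hφ2]
  have hcast : ((m + 2 : ℕ) : ℝ) = (m : ℝ) + 2 := by push_cast; ring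
  rw [hcast]
  have key : Real.sin (((m : ℝ) + 2 + 2) * φ)
      = 2 * Real.cos (((m : ℝ) + 3) * φ) * Real.sin φ + Real.sin (((m : ℝ) + 2) * φ) := by
    have h1 := Real.sin_add (((m : ℝ) + 3) * φ) φ
    have h2 := Real.sin_sub (((m : ℝ) + 3) * φ) φ
    have e1 : ((m : ℝ) + 3) * φ + φ = ((m : ℝ) + 2 + 2) * φ := by ring
    have e2 : ((m : ℝ) + 3) * φ - φ = ((m : ℝ) + 2) * φ := by ring
    rw [e1] at h1
    rw [e2] at h2
    linarith
  rw [key]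
  field_simp
  ring_nf
  field_simp
  ring_nf

end IndepAux

open Polynomial

set_option maxHeartbeats 1000000 in
/-- The roots of `I(C_n,x)` are exactly `-1/(2 + 2cos((2i-1)π/n))` for `i = 1, …, ⌊n/2⌋`. -/
theorem indepPoly_cycle_roots (n : ℕ) (hn : 3 ≤ n) (x : ℝ) :
    (indepPoly (SimpleGraph.cycleGraph n)).eval x = 0 ↔
      ∃ i : ℕ, 1 ≤ i ∧ i ≤ n / 2 ∧
        x = -(1 / (2 + 2 * Real.cos ((2 * (i : ℝ) - 1) * Real.pi / n))) := by
  obtain ⟨m, rfl⟩ : ∃ m, n = m + 3 := ⟨n - 3, by omega⟩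
  have hπ := Real.pi_pos
  have heval : (indepPoly (SimpleGraph.cycleGraph (m + 3))).eval x
      = IndepAux.pfun x (m + 2) + x * IndepAux.pfun x m := by
    rw [indepPoly, Polynomial.eval_finset_sum]
    simp only [Polynomial.eval_pow, Polynomial.eval_X]
    have := IndepAux.cyc_sum x m
    convert this using 3
  rw [heval]
  have hNpos : (0 : ℝ) < (m : ℝ) + 3 := by positivity
  have hNcast : (((m + 3 : ℕ)) : ℝ) = (m : ℝ) + 3 := by push_cast; ring
  rcases le_or_gt (-(1/4) : ℝ) x with hx | hx
  · constructor
    · intro h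
      exact absurd h (ne_of_gt (IndepAux.cyc_pos hx m))
    · rintro ⟨i, hi1, hi2, rfl⟩
      exfalso
      set θ : ℝ := (2 * (i : ℝ) - 1) * Real.pi / ((m + 3 : ℕ)) with hθdef
      have hi3 : 2 * i ≤ m + 3 := by omega
      have hicast : (1 : ℝ) ≤ (i : ℝ) := by exact_mod_cast hi1
      have hicast2 : 2 * (i : ℝ) ≤ (m : ℝ) + 3 := by exact_mod_cast hi3
      have hθpos : 0 < θ := by
        rw [hθdef, hNcast]
        apply div_pos (by nlinarith) hNpos
      have hθlt : θ < Real.pi := by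
        rw [hθdef, hNcast, div_lt_iff₀ hNpos]
        nlinarith
      have hmem0 : (0 : ℝ) ∈ Set.Icc 0 Real.pi := ⟨le_refl _, le_of_lt hπ⟩
      have hmemθ : θ ∈ Set.Icc 0 Real.pi := ⟨le_of_lt hθpos, le_of_lt hθlt⟩
      have hmemπ : Real.pi ∈ Set.Icc 0 Real.pi := ⟨le_of_lt hπ, le_refl _⟩
      have hlt1 : Real.cos θ < 1 := by
        have := Real.strictAntiOn_cos hmem0 hmemθ hθpos
        rwa [Real.cos_zero] at this
      have hgt1 : -1 < Real.cos θ := by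
        have := Real.strictAntiOn_cos hmemθ hmemπ hθlt
        rwa [Real.cos_pi] at this
      have hden : 0 < 2 + 2 * Real.cos θ := by linarith
      have : (1 : ℝ) / 4 < 1 / (2 + 2 * Real.cos θ) :=
        one_div_lt_one_div_of_lt hden (by linarith)
      linarith
  · -- x < -1/4
    have hxpos : 0 < -x := by linarith
    set c : ℝ := 1 / (2 * Real.sqrt (-x)) with hcdef
    have hsq : Real.sqrt (-x) ^ 2 = -x := Real.sq_sqrt (le_of_lt hxpos)
    have hsqrtpos : 0 < Real.sqrt (-x) := Real.sqrt_pos.mpr hxpos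
    have hsqrt_gt : 1/2 < Real.sqrt (-x) := by nlinarith
    have hc0 : 0 < c := by rw [hcdef]; positivity
    have hc1 : c < 1 := by
      rw [hcdef, div_lt_one (by positivity)]
      linarith
    set φ := Real.arccos c with hφdef
    have hcos : Real.cos φ = c := Real.cos_arccos (by linarith) (le_of_lt hc1)
    have hφ1 : 0 < φ := Real.arccos_pos.mpr hc1
    have hφ2 : φ < Real.pi / 2 := Real.arccos_lt_pi_div_two.mpr hc0
    have hcosφpos : 0 < Real.cos φ := by rw [hcos]; exact hc0
    have hxeq : x = -(1 / (4 * Real.cos φ ^ 2)) := by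
      rw [hcos, hcdef]
      rw [div_pow, one_pow, mul_pow]
      rw [hsq]
      field_simp
      ring
    have h2r : (0:ℝ) < 2 * (1 / (2 * Real.cos φ)) ^ (m + 3) := by positivity
    have hEV : IndepAux.pfun x (m + 2) + x * IndepAux.pfun x m
        = 2 * (1 / (2 * Real.cos φ)) ^ (m + 3) * Real.cos (((m : ℝ) + 3) * φ) := by
      rw [hxeq]
      exact IndepAux.cyc_trig hφ1 hφ2 m
    rw [hEV, mul_eq_zero]
    simp only [(ne_of_gt h2r), false_or]
    rw [Real.cos_eq_zero_iff]
    constructor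
    · rintro ⟨k, hk⟩
      have hk0 : 0 ≤ k := by
        by_contra hneg
        push_neg at hneg
        have hkle' : k ≤ -1 := by omega
        have hkle : (k : ℝ) ≤ -1 := by exact_mod_cast hkle'
        have hlhs : 0 < ((m : ℝ) + 3) * φ := by positivity
        rw [hk] at hlhs
        nlinarith
      have hklt : (2 * (k : ℝ) + 1) < (m : ℝ) + 3 := by
        have hub : ((m : ℝ) + 3) * φ < ((m : ℝ) + 3) * (Real.pi / 2) :=
          mul_lt_mul_of_pos_left hφ2 hNpos
        rw [hk] at hub
        nlinarith
      have hkk : ((k.toNat : ℕ) : ℝ) = (k : ℝ) := by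
        exact_mod_cast congrArg (Int.cast : ℤ → ℝ) (Int.toNat_of_nonneg hk0)
      refine ⟨k.toNat + 1, le_add_self, ?_, ?_⟩
      · have hi : 2 * k.toNat + 1 < m + 3 := by
          have h' : (2 * ((k.toNat : ℕ) : ℝ) + 1) < ((m : ℝ) + 3) := by
            rw [hkk]; exact hklt
          exact_mod_cast h'
        omega
      · have h2φ : (2 * ((k.toNat + 1 : ℕ) : ℝ) - 1) * Real.pi / ((m + 3 : ℕ)) = 2 * φ := by
          rw [hNcast]
          rw [show ((k.toNat + 1 : ℕ) : ℝ) = ((k.toNat : ℕ) : ℝ) + 1 by push_cast; ring]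
          rw [hkk]
          rw [div_eq_iff (ne_of_gt hNpos)]
          linear_combination (-2 : ℝ) * hk
        rw [h2φ, Real.cos_two_mul, hxeq]
        have h4 : 2 + 2 * (2 * Real.cos φ ^ 2 - 1) = 4 * Real.cos φ ^ 2 := by ring
        rw [h4]
    · rintro ⟨i, hi1, hi2, hxval⟩
      set θ : ℝ := (2 * (i : ℝ) - 1) * Real.pi / ((m + 3 : ℕ)) with hθdef
      have hi3 : 2 * i ≤ m + 3 := by omega
      have hicast : (1 : ℝ) ≤ (i : ℝ) := by exact_mod_cast hi1
      have hicast2 : 2 * (i : ℝ) ≤ (m : ℝ) + 3 := by exact_mod_cast hi3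
      have hione : 0 < 2 * (i:ℝ) - 1 := by linarith
      have hilt : 2 * (i:ℝ) - 1 < (m:ℝ) + 3 := by linarith
      have hθpos : 0 < θ := by
        rw [hθdef, hNcast]
        exact div_pos (mul_pos hione hπ) hNpos
      have hθlt : θ < Real.pi := by
        rw [hθdef, hNcast, div_lt_iff₀ hNpos]
        exact lt_of_lt_of_eq (mul_lt_mul_of_pos_right hilt hπ) (mul_comm _ _)
      have hhalfpos : 0 < θ / 2 := by linarith
      have hhalflt : θ / 2 < Real.pi / 2 := by linarith
      have hcoshalf : 0 < Real.cos (θ / 2) :=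
        Real.cos_pos_of_mem_Ioo ⟨by linarith, hhalflt⟩
      have hcosθ : 2 + 2 * Real.cos θ = 4 * Real.cos (θ / 2) ^ 2 := by
        have h := Real.cos_two_mul (θ / 2)
        rw [show 2 * (θ / 2) = θ by ring] at h
        rw [h]; ring
      rw [hcosθ] at hxval
      have hxval' : -(1 / (4 * Real.cos φ ^ 2)) = -(1 / (4 * Real.cos (θ / 2) ^ 2)) := by
        rw [← hxeq]; exact hxval
      have hA : (0:ℝ) < 4 * Real.cos φ ^ 2 :=
        mul_pos (by norm_num) (pow_pos hcosφpos 2)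
      have hB : (0:ℝ) < 4 * Real.cos (θ / 2) ^ 2 :=
        mul_pos (by norm_num) (pow_pos hcoshalf 2)
      have hinv : 1 / (4 * Real.cos φ ^ 2) = 1 / (4 * Real.cos (θ / 2) ^ 2) :=
        neg_inj.mp hxval'
      have hAB : 4 * Real.cos φ ^ 2 = 4 * Real.cos (θ / 2) ^ 2 := by
        rw [div_eq_div_iff (ne_of_gt hA) (ne_of_gt hB)] at hinv
        linarith
      have hcoseq : Real.cos φ = Real.cos (θ / 2) := by
        nlinarith [hAB, hcosφpos, hcoshalf]
      have hφeq : φ = θ / 2 :=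
        Real.injOn_cos ⟨le_of_lt hφ1, by linarith⟩ ⟨le_of_lt hhalfpos, by linarith⟩ hcoseq
      refine ⟨(i : ℤ) - 1, ?_⟩
      rw [hφeq, hθdef, hNcast]
      rw [show ((2:ℝ) * (((i : ℤ) - 1 : ℤ) : ℝ) + 1) = 2 * (i:ℝ) - 1 by push_cast; ring]
      field_simp
end

section
/- For n ≥ 1, the roots of the independence polynomial of the path P_n are exactly the numbers -1/(2 + 2cos(2iπ/(n+2))) for i = 1, ..., ⌊(n+1)/2⌋. -/
open Polynomial

section Aux
open Finset


def pathIndep (n : ℕ) : Finset (Finset ℕ) :=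
  (Finset.range n).powerset.filter (fun s => ∀ a ∈ s, a + 1 ∉ s)

noncomputable def S (n : ℕ) (x : ℝ) : ℝ := ∑ s ∈ pathIndep n, x ^ s.card

lemma S_zero (x : ℝ) : S 0 x = 1 := by
  have : pathIndep 0 = {∅} := by decide
  simp [S, this]

lemma S_one (x : ℝ) : S 1 x = 1 + x := by
  have : pathIndep 1 = {∅, {0}} := by decide
  rw [S, this, Finset.sum_pair (by decide)]
  simp

lemma mem_pathIndep {n : ℕ} {s : Finset ℕ} :
    s ∈ pathIndep n ↔ (∀ a ∈ s, a < n) ∧ ∀ a ∈ s, a + 1 ∉ s := by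
  simp [pathIndep, Finset.subset_iff]

lemma filter_not_mem_eq (n : ℕ) :
    (pathIndep (n + 2)).filter (fun s => n + 1 ∉ s) = pathIndep (n + 1) := by
  ext s
  simp only [Finset.mem_filter, mem_pathIndep]
  constructor
  · rintro ⟨⟨hb, hi⟩, hns⟩
    refine ⟨fun a ha => ?_, hi⟩
    have := hb a ha
    rcases Nat.lt_or_ge a (n + 1) with h | h
    · exact h
    · exfalso; have : a = n + 1 := by omega
      exact hns (this ▸ ha)
  · rintro ⟨hb, hi⟩
    exact ⟨⟨fun a ha => Nat.lt_succ_of_lt (hb a ha), hi⟩, fun hc => by have := hb _ hc; omega⟩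

lemma S_rec (n : ℕ) (x : ℝ) : S (n + 2) x = S (n + 1) x + x * S n x := by
  rw [S, ← Finset.sum_filter_add_sum_filter_not (pathIndep (n+2)) (fun s => n + 1 ∈ s)]
  have h1 : (pathIndep (n + 2)).filter (fun s => ¬ n + 1 ∈ s) = pathIndep (n + 1) :=
    filter_not_mem_eq n
  rw [h1]
  have h2 : ∑ s ∈ (pathIndep (n + 2)).filter (fun s => n + 1 ∈ s), x ^ s.card
      = ∑ t ∈ pathIndep n, x ^ (t.card + 1) := by
    apply Finset.sum_bij (fun s _ => s.erase (n + 1))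
    · intro s hs
      simp only [Finset.mem_filter, mem_pathIndep] at hs
      obtain ⟨⟨hb, hi⟩, hmem⟩ := hs
      rw [mem_pathIndep]
      constructor
      · intro a ha
        rw [Finset.mem_erase] at ha
        have h := hb a ha.2
        have hne : a ≠ n := by
          rintro rfl
          exact hi a ha.2 hmem
        omega
      · intro a ha
        rw [Finset.mem_erase] at ha
        intro hc
        exact hi a ha.2 (Finset.mem_of_mem_erase hc)
    · intro s hs t ht h
      simp only [Finset.mem_filter] at hs ht
      have : insert (n+1) (s.erase (n+1)) = insert (n+1) (t.erase (n+1)) := by rw [h]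
      rwa [Finset.insert_erase hs.2, Finset.insert_erase ht.2] at this
    · intro t ht
      rw [mem_pathIndep] at ht
      refine ⟨insert (n + 1) t, ?_, ?_⟩
      · simp only [Finset.mem_filter, mem_pathIndep]
        refine ⟨⟨?_, ?_⟩, Finset.mem_insert_self _ _⟩
        · intro a ha
          rcases Finset.mem_insert.mp ha with rfl | h
          · omega
          · have := ht.1 a h; omega
        · intro a ha hc
          rcases Finset.mem_insert.mp ha with rfl | h
          · rcases Finset.mem_insert.mp hc with h' | h'
            · omega
            · have := ht.1 _ h'; omega
          · rcases Finset.mem_insert.mp hc with h' | h'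
            · have := ht.1 _ h; omega
            · exact ht.2 a h h'
      · rw [Finset.erase_insert]
        intro hc
        have := ht.1 _ hc; omega
    · intro s hs
      simp only [Finset.mem_filter] at hs
      rw [Finset.card_erase_of_mem hs.2]
      congr 1
      have : 1 ≤ s.card := Finset.card_pos.mpr ⟨n + 1, hs.2⟩
      omega
  rw [h2]
  simp only [pow_succ]
  rw [← Finset.sum_mul, add_comm]
  rw [S, S]
  ring

open scoped Classical in
lemma indepPoly_path_eval (n : ℕ) (x : ℝ) :
    (indepPoly (SimpleGraph.pathGraph n)).eval x = S n x := by
  rw [indepPoly, eval_finset_sum]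
  simp only [eval_pow, eval_X]
  rw [S]
  apply Finset.sum_bij (fun (s : Finset (Fin n)) _ => s.map Fin.valEmbedding)
  · intro s hs
    simp only [Finset.mem_filter, Finset.mem_univ, true_and] at hs
    rw [mem_pathIndep]
    constructor
    · intro a ha
      rw [Finset.mem_map] at ha
      obtain ⟨u, hu, rfl⟩ := ha
      exact u.isLt
    · intro a ha hc
      rw [Finset.mem_map] at ha hc
      obtain ⟨u, hu, hua⟩ := ha
      obtain ⟨v, hv, hva⟩ := hc
      exact hs u hu v hv (SimpleGraph.pathGraph_adj.mpr (Or.inl (by simp [Fin.valEmbedding] at hua hva; omega)))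
  · intro s _ t _ h
    exact Finset.map_injective _ h
  · intro t ht
    rw [mem_pathIndep] at ht
    refine ⟨t.attachFin (fun m hm => ht.1 m hm), ?_, ?_⟩
    · simp only [Finset.mem_filter, Finset.mem_univ, true_and]
      intro u hu v hv hadj
      rw [Finset.mem_attachFin] at hu hv
      rcases SimpleGraph.pathGraph_adj.mp hadj with h | h
      · exact ht.2 _ hu (h ▸ hv)
      · exact ht.2 _ hv (h ▸ hu)
    · ext a
      simp [Finset.mem_map, Finset.mem_attachFin]
  · intro s _
    rw [Finset.card_map]

lemma S_pos (x : ℝ) (hx : -(1/4) ≤ x) : ∀ n, 0 < S n x ∧ S n x / 2 ≤ S (n+1) x := by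
  intro n
  induction n with
  | zero =>
    rw [S_zero, S_one]
    constructor <;> linarith
  | succ n ih =>
    obtain ⟨h0, h1⟩ := ih
    have hp : 0 < S (n+1) x := lt_of_lt_of_le (by linarith) h1
    refine ⟨hp, ?_⟩
    rw [S_rec]
    nlinarith [mul_le_mul_of_nonneg_right hx (le_of_lt h0)]

lemma S_formula (x r θ : ℝ) (hr : 1/2 < r) (hx : x = -(r^2))
    (hc : Real.cos θ = 1/(2*r)) (hs : 0 < Real.sin θ) (n : ℕ) :
    S n x = r^(n+1) * Real.sin (((n:ℝ)+2)*θ) / Real.sin θ := by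
  have hr0 : r ≠ 0 := by linarith
  have hs0 : Real.sin θ ≠ 0 := ne_of_gt hs
  induction n using Nat.strong_induction_on with
  | _ n ih =>
    match n with
    | 0 =>
      rw [S_zero]
      have h2 : (((0:ℕ):ℝ)+2)*θ = 2*θ := by norm_num
      rw [h2, Real.sin_two_mul, hc]
      field_simp
      ring
    | 1 =>
      rw [S_one, hx]
      have h3 : ((1:ℕ):ℝ)+2 = 3 := by norm_num
      rw [h3, Real.sin_three_mul]
      have hcos2 : (2*r)^2 * Real.cos θ ^ 2 = 1 := by
        rw [hc]; field_simp
      have hsin2 : 4*r^2*Real.sin θ^2 = 4*r^2 - 1 := by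
        linear_combination 4*r^2*(Real.sin_sq_add_cos_sq θ) - hcos2
      rw [eq_div_iff hs0]
      linear_combination Real.sin θ * hsin2
    | (n + 2) =>
      have ih1 := ih (n+1) (by omega)
      have ih2 := ih n (by omega)
      rw [S_rec, ih1, ih2]
      have key : Real.sin (((n:ℝ)+4)*θ) = 2 * Real.sin (((n:ℝ)+3)*θ) * Real.cos θ - Real.sin (((n:ℝ)+2)*θ) := by
        have h1 := Real.sin_add (((n:ℝ)+3)*θ) θ
        have h2 := Real.sin_sub (((n:ℝ)+3)*θ) θ
        have e1 : ((n:ℝ)+3)*θ + θ = ((n:ℝ)+4)*θ := by ring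
        have e2 : ((n:ℝ)+3)*θ - θ = ((n:ℝ)+2)*θ := by ring
        rw [e1] at h1
        rw [e2] at h2
        linarith
      have c1 : ((n:ℝ)+1)+2 = (n:ℝ)+3 := by ring
      have c2 : ((n+2:ℕ):ℝ)+2 = (n:ℝ)+4 := by push_cast; ring
      have c3 : ((n+1:ℕ):ℝ) = (n:ℝ)+1 := by push_cast; ring
      rw [c2, c3, c1, key, hc, hx]
      field_simp
      ring

end Aux

/-- The roots of `I(P_n,x)` are exactly `-1/(2 + 2cos(2iπ/(n+2)))` for `i = 1, …, ⌊(n+1)/2⌋`. -/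
theorem indepPoly_path_roots (n : ℕ) (hn : 1 ≤ n) (x : ℝ) :
    (indepPoly (SimpleGraph.pathGraph n)).eval x = 0 ↔
      ∃ i : ℕ, 1 ≤ i ∧ i ≤ (n + 1) / 2 ∧
        x = -(1 / (2 + 2 * Real.cos (2 * (i : ℝ) * Real.pi / ((n : ℝ) + 2)))) := by
  rw [indepPoly_path_eval]
  have hπ := Real.pi_pos
  have hn2 : (0:ℝ) < (n:ℝ) + 2 := by positivity
  constructor
  · intro h0
    rcases lt_or_ge x (-(1/4)) with hx | hx
    · -- x < -1/4 : use closed form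
      set r := Real.sqrt (-x) with hrdef
      have hxpos : (0:ℝ) < -x := by linarith
      have hrhalf : (1:ℝ)/2 < r := by
        have h14 : Real.sqrt (1/4) = 1/2 := by
          rw [show (1/4:ℝ) = (1/2)^2 by norm_num, Real.sqrt_sq (by norm_num)]
        calc (1:ℝ)/2 = Real.sqrt (1/4) := h14.symm
          _ < r := Real.sqrt_lt_sqrt (by norm_num) (by linarith)
      have hx2 : x = -(r^2) := by
        rw [hrdef, Real.sq_sqrt (le_of_lt hxpos)]; ring
      set θ := Real.arccos (1/(2*r)) with hθdef
      have hv1 : (0:ℝ) < 1/(2*r) := by positivity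
      have hv2 : 1/(2*r) < 1 := by
        rw [div_lt_one (by linarith)]; linarith
      have hc : Real.cos θ = 1/(2*r) := Real.cos_arccos (by linarith) (le_of_lt hv2)
      have hθpos : 0 < θ := Real.arccos_pos.mpr hv2
      have hθlt : θ < Real.pi/2 := Real.arccos_lt_pi_div_two.mpr hv1
      have hsin : 0 < Real.sin θ := Real.sin_pos_of_pos_of_lt_pi hθpos (by linarith)
      rw [S_formula x r θ hrhalf hx2 hc hsin n] at h0
      have hsz : Real.sin (((n:ℝ)+2)*θ) = 0 := by
        have hr0 : r ^ (n+1) ≠ 0 := pow_ne_zero _ (by linarith)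
        field_simp at h0
        rcases mul_eq_zero.mp (h0.trans (mul_zero _)) with h | h
        · exact absurd h hr0
        · exact h
      obtain ⟨k, hk⟩ := Real.sin_eq_zero_iff.mp hsz
      have hkpos : 0 < k := by
        have : (0:ℝ) < (k:ℝ) * Real.pi := by rw [hk]; positivity
        by_contra h
        push_neg at h
        have : (k:ℝ) ≤ 0 := by exact_mod_cast h
        nlinarith
      have hkub : 2 * k < (n:ℤ) + 2 := by
        have h1 : (k:ℝ) * Real.pi < ((n:ℝ)+2) * (Real.pi/2) := by
          rw [hk]
          have := mul_lt_mul_of_pos_left hθlt hn2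
          linarith
        have h2 : 2 * (k:ℝ) < (n:ℝ) + 2 := by nlinarith
        exact_mod_cast h2
      refine ⟨k.toNat, by omega, ?_, ?_⟩
      · rw [Nat.le_div_iff_mul_le (by norm_num)]
        omega
      · have hkn : ((k.toNat : ℕ) : ℝ) = (k : ℝ) := by
          have h1 : (k.toNat : ℤ) = k := Int.toNat_of_nonneg hkpos.le
          calc ((k.toNat:ℕ):ℝ) = ((k.toNat:ℤ):ℝ) := by push_cast; ring
            _ = (k:ℝ) := by rw [h1]
        have hθval : θ = (k:ℝ) * Real.pi / ((n:ℝ)+2) := by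
          field_simp
          linarith [hk]
        have h2θ : 2 * ((k.toNat : ℕ):ℝ) * Real.pi / ((n:ℝ)+2) = 2*θ := by
          rw [hkn, hθval]; ring
        rw [h2θ, Real.cos_two_mul, hc]
        have hden : (2:ℝ) + 2*(2*(1/(2*r))^2 - 1) = 1/r^2 := by
          field_simp; ring
        rw [hden, one_div_one_div, hx2]
    · exfalso
      have := (S_pos x hx n).1
      linarith
  · rintro ⟨i, hi1, hi2, rfl⟩
    set φ := (i:ℝ) * Real.pi / ((n:ℝ)+2) with hφdef
    have hφpos : 0 < φ := by
      apply div_pos _ hn2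
      have : (1:ℝ) ≤ (i:ℝ) := by exact_mod_cast hi1
      nlinarith
    have h2i : (i:ℝ) * 2 ≤ (n:ℝ) + 1 := by
      have := (Nat.le_div_iff_mul_le (by norm_num : 0 < 2)).mp hi2
      exact_mod_cast this
    have hφlt : φ < Real.pi/2 := by
      rw [hφdef, div_lt_iff₀ hn2]
      nlinarith
    have hcpos : 0 < Real.cos φ := Real.cos_pos_of_mem_Ioo ⟨by linarith, hφlt⟩
    have hclt : Real.cos φ < 1 := by
      refine lt_of_le_of_ne (Real.cos_le_one φ) ?_
      intro h
      have := (Real.cos_eq_one_iff_of_lt_of_lt (by linarith) (by linarith)).mp h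
      linarith
    set r := 1/(2*Real.cos φ) with hrdef
    have hrhalf : (1:ℝ)/2 < r := by
      rw [hrdef]
      rw [div_lt_div_iff₀ (by norm_num) (by positivity)]
      linarith
    have hsin : 0 < Real.sin φ := Real.sin_pos_of_pos_of_lt_pi hφpos (by linarith)
    have hc : Real.cos φ = 1/(2*r) := by
      rw [hrdef]; field_simp
    have he : 2 * (i:ℝ) * Real.pi / ((n:ℝ)+2) = 2*φ := by
      rw [hφdef]; ring
    have hx2 : -(1 / (2 + 2 * Real.cos (2 * (i : ℝ) * Real.pi / ((n : ℝ) + 2)))) = -(r^2) := by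
      rw [he, Real.cos_two_mul, hrdef]
      rw [show (2:ℝ) + 2*(2*Real.cos φ^2 - 1) = 4 * Real.cos φ^2 by ring]
      rw [show (1/(2*Real.cos φ))^2 = 1/(4*Real.cos φ^2) by field_simp; ring]
    rw [hx2, S_formula _ r φ hrhalf rfl hc hsin n]
    have hnφ : ((n:ℝ)+2)*φ = (i:ℝ) * Real.pi := by
      rw [hφdef]; field_simp
    rw [hnφ, Real.sin_nat_mul_pi]
    simp
end

section
/- All roots of the independence polynomial of the path P_n are real and strictly less than -1/4. -/
open Polynomial

open SimpleGraph
open scoped Classical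

/-- Fibonacci-style recursion satisfied by the independence polynomials of paths. -/
noncomputable def pPoly : ℕ → Polynomial ℝ
  | 0 => 1
  | 1 => 1 + X
  | (n+2) => pPoly (n+1) + X * pPoly n

noncomputable def indepSets (n : ℕ) : Finset (Finset (Fin n)) :=
  Finset.univ.filter (fun s : Finset (Fin n) => ∀ u ∈ s, ∀ v ∈ s, ¬ (pathGraph n).Adj u v)

lemma indepPoly_eq_sum (n : ℕ) : indepPoly (pathGraph n) = ∑ s ∈ indepSets n, X ^ s.card := by
  rw [indepPoly, indepSets]
  congr!

lemma mem_indepSets {n : ℕ} {s : Finset (Fin n)} :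
    s ∈ indepSets n ↔ ∀ u ∈ s, ∀ v ∈ s, ¬ ((u:ℕ) + 1 = v ∨ (v:ℕ) + 1 = u) := by
  rw [indepSets]
  simp [pathGraph_adj]

lemma indepPoly_path_zero : indepPoly (pathGraph 0) = pPoly 0 := by
  rw [pPoly]
  simp [indepPoly]
  rfl

lemma indepPoly_path_one : indepPoly (pathGraph 1) = pPoly 1 := by
  rw [pPoly, indepPoly_eq_sum]
  have h1 : indepSets 1 = Finset.univ := by
    ext s
    rw [mem_indepSets]
    simp only [Finset.mem_univ, iff_true]
    intro u _ v _
    have hu := u.isLt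
    have hv := v.isLt
    omega
  have h2 : (Finset.univ : Finset (Finset (Fin 1))) = {∅, {0}} := by decide
  rw [h1, h2]
  rw [Finset.sum_insert (by decide), Finset.sum_singleton]
  simp

lemma indepPoly_path_rec (n : ℕ) :
    indepPoly (pathGraph (n+2)) = indepPoly (pathGraph (n+1)) + X * indepPoly (pathGraph n) := by
  rw [indepPoly_eq_sum, indepPoly_eq_sum, indepPoly_eq_sum]
  rw [← Finset.sum_filter_add_sum_filter_not (indepSets (n+2)) (fun s => Fin.last (n+1) ∈ s)]
  rw [add_comm]
  congr 1
  · refine (Finset.sum_nbij' (fun s : Finset (Fin (n+1)) => s.image Fin.castSucc)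
      (fun t => Finset.univ.filter (fun x : Fin (n+1) => x.castSucc ∈ t)) ?_ ?_ ?_ ?_ ?_).symm
    · intro s hs
      rw [mem_indepSets] at hs
      simp only [Finset.mem_filter, mem_indepSets, Finset.mem_image]
      refine ⟨?_, ?_⟩
      · rintro u ⟨u', hu', rfl⟩ v ⟨v', hv', rfl⟩
        simpa using hs u' hu' v' hv'
      · rintro ⟨y, _, hy⟩
        have := congrArg Fin.val hy
        simp [Fin.last] at this
        omega
    · intro t ht
      simp only [Finset.mem_filter, mem_indepSets] at ht
      rw [mem_indepSets]
      intro u hu v hv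
      simp only [Finset.mem_filter, Finset.mem_univ, true_and] at hu hv
      simpa using ht.1 _ hu _ hv
    · intro s _
      ext x
      simp [Finset.mem_image, Fin.castSucc_inj]
    · intro t ht
      simp only [Finset.mem_filter, mem_indepSets] at ht
      ext x
      simp only [Finset.mem_image, Finset.mem_filter, Finset.mem_univ, true_and]
      constructor
      · rintro ⟨y, hy, rfl⟩; exact hy
      · intro hx
        have hne : x ≠ Fin.last (n+1) := fun h => ht.2 (h ▸ hx)
        obtain ⟨y, rfl⟩ := Fin.exists_castSucc_eq.2 hne
        exact ⟨y, hx, rfl⟩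
    · intro s _
      rw [Finset.card_image_of_injective _ (Fin.castSucc_injective _)]
  · rw [Finset.mul_sum]
    refine (Finset.sum_nbij'
      (fun s : Finset (Fin n) => insert (Fin.last (n+1)) (s.image (fun y => y.castSucc.castSucc)))
      (fun t => Finset.univ.filter (fun x : Fin n => x.castSucc.castSucc ∈ t)) ?_ ?_ ?_ ?_ ?_).symm
    · intro s hs
      rw [mem_indepSets] at hs
      simp only [Finset.mem_filter, mem_indepSets, Finset.mem_insert, Finset.mem_image]
      refine ⟨?_, by simp⟩
      rintro u (rfl | ⟨u', hu', rfl⟩) v (rfl | ⟨v', hv', rfl⟩)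
      · simp [Fin.last]
      · have : (v':ℕ) < n := v'.isLt
        simp [Fin.last]
        omega
      · have : (u':ℕ) < n := u'.isLt
        simp [Fin.last]
        omega
      · simpa using hs u' hu' v' hv'
    · intro t ht
      simp only [Finset.mem_filter, mem_indepSets] at ht
      rw [mem_indepSets]
      intro u hu v hv
      simp only [Finset.mem_filter, Finset.mem_univ, true_and] at hu hv
      simpa using ht.1 _ hu _ hv
    · intro s _
      ext x
      have hx : (x:ℕ) < n := x.isLt
      simp only [Finset.mem_filter, Finset.mem_univ, true_and, Finset.mem_insert,
        Finset.mem_image]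
      constructor
      · rintro (h | ⟨y, hy, h⟩)
        · exfalso
          have := congrArg Fin.val h
          simp [Fin.last] at this
          omega
        · have := congrArg Fin.val h
          simp at this
          rwa [show y = x from Fin.ext this] at hy
      · intro h; exact Or.inr ⟨x, h, rfl⟩
    · intro t ht
      simp only [Finset.mem_filter, mem_indepSets] at ht
      obtain ⟨hind, hlast⟩ := ht
      ext x
      simp only [Finset.mem_insert, Finset.mem_image, Finset.mem_filter, Finset.mem_univ, true_and]
      constructor
      · rintro (rfl | ⟨y, hy, rfl⟩)
        · exact hlast
        · exact hy
      · intro hx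
        by_cases h : x = Fin.last (n+1)
        · exact Or.inl h
        · right
          have h1 : (x:ℕ) < n + 1 := by
            have := x.isLt
            have : (x:ℕ) ≠ n + 1 := fun hc => h (Fin.ext (by simp [Fin.last, hc]))
            omega
          have h2 : (x:ℕ) ≠ n := by
            intro hc
            exact hind x hx (Fin.last (n+1)) hlast (Or.inl (by simp [Fin.last, hc]))
          have h3 : (x:ℕ) < n := by omega
          refine ⟨⟨x, h3⟩, ?_, Fin.ext (by simp)⟩
          have : (⟨(x:ℕ), h3⟩ : Fin n).castSucc.castSucc = x := Fin.ext (by simp)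
          rwa [this]
    · intro s _
      have hnot : Fin.last (n+1) ∉ s.image (fun y : Fin n => y.castSucc.castSucc) := by
        simp only [Finset.mem_image]
        rintro ⟨y, _, hy⟩
        have := congrArg Fin.val hy
        have := y.isLt
        simp [Fin.last] at *
        omega
      have hinj : Function.Injective (fun y : Fin n => y.castSucc.castSucc) := by
        intro a b h
        have := congrArg Fin.val h
        simp at this
        exact Fin.ext this
      rw [Finset.card_insert_of_notMem hnot, Finset.card_image_of_injective _ hinj,
        pow_succ, mul_comm]

lemma indepPoly_path_eq (n : ℕ) : indepPoly (pathGraph n) = pPoly n := by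
  induction n using Nat.strong_induction_on with
  | _ n ih =>
    match n with
    | 0 => exact indepPoly_path_zero
    | 1 => exact indepPoly_path_one
    | (m+2) =>
      rw [indepPoly_path_rec, ih (m+1) (by omega), ih m (by omega), pPoly]

lemma pPoly_key (n : ℕ) (a : ℂ) :
    (a - (1 - a)) * aeval (-(a * (1 - a))) (pPoly n) = a ^ (n + 2) - (1 - a) ^ (n + 2) := by
  induction n using Nat.strong_induction_on with
  | _ n ih =>
    match n with
    | 0 => simp [pPoly]; ring
    | 1 => simp [pPoly]; ring
    | (m+2) =>
      have h1 := ih (m+1) (by omega)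
      have h2 := ih m (by omega)
      simp only [pPoly, map_add, map_mul, aeval_X]
      have e1 : m + 1 + 2 = m + 3 := rfl
      have e2 : m + 2 + 2 = m + 4 := rfl
      rw [e1] at h1
      rw [e2]
      linear_combination h1 + (-(a * (1 - a))) * h2

lemma pPoly_quarter (n : ℕ) : aeval (-(1/4) : ℂ) (pPoly n) = (n + 2) / 2 ^ (n + 1) := by
  induction n using Nat.strong_induction_on with
  | _ n ih =>
    match n with
    | 0 => simp [pPoly]
    | 1 => simp [pPoly]; norm_num
    | (m+2) =>
      have h1 := ih (m+1) (by omega)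
      have h2 := ih m (by omega)
      simp only [pPoly, map_add, map_mul, aeval_X, h1, h2]
      have h : (2:ℂ) ^ (m + 1) ≠ 0 := pow_ne_zero _ two_ne_zero
      push_cast
      field_simp
      ring

/-- All roots of `I(P_n,x)` are real and strictly less than `-1/4`. -/
theorem indepPoly_path_roots_real_lt_neg_quarter (n : ℕ) (hn : 1 ≤ n) (z : ℂ)
    (hz : Polynomial.aeval z (indepPoly (SimpleGraph.pathGraph n)) = 0) :
    z.im = 0 ∧ z.re < -(1 / 4) := by
  rw [indepPoly_path_eq] at hz
  obtain ⟨w, hw⟩ := IsAlgClosed.exists_pow_nat_eq (1 + 4 * z) (n := 2) (by norm_num)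
  -- case w = 0
  by_cases hw0 : w = 0
  · exfalso
    have hz4 : z = -(1/4) := by
      rw [hw0] at hw
      have : (1 : ℂ) + 4 * z = 0 := by rw [← hw]; ring
      linear_combination this / 4
    rw [hz4, pPoly_quarter] at hz
    have h : ((n:ℂ) + 2) = 0 := by
      field_simp at hz
      exact_mod_cast hz
    have h' : n + 2 = 0 := by exact_mod_cast h
    omega
  · set a : ℂ := (1 + w) / 2 with ha
    have hza : -(a * (1 - a)) = z := by
      rw [ha]
      field_simp
      linear_combination hw
    have hk := pPoly_key n a
    rw [hza, hz, mul_zero] at hk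
    have hpow : a ^ (n+2) = (1 - a) ^ (n+2) := by linear_combination -hk
    -- a ≠ 0 and 1 - a ≠ 0
    have h1a : (1 : ℂ) - a = (1 - w) / 2 := by rw [ha]; ring
    have hane : a ≠ 0 ∨ True := Or.inr trivial
    have habs : ‖a‖ = ‖1 - a‖ := by
      have h1 : ‖a‖ ^ (n+2) = ‖1-a‖ ^ (n+2) := by
        rw [← norm_pow, ← norm_pow, hpow]
      rcases lt_trichotomy ‖a‖ ‖1-a‖ with hl | he | hl
      · exfalso
        have := pow_lt_pow_left₀ hl (norm_nonneg a) (by omega : n + 2 ≠ 0)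
        rw [h1] at this; exact lt_irrefl _ this
      · exact he
      · exfalso
        have := pow_lt_pow_left₀ hl (norm_nonneg (1-a)) (by omega : n + 2 ≠ 0)
        rw [← h1] at this; exact lt_irrefl _ this
    -- |1+w| = |1-w| hence Re w = 0
    have hre : w.re = 0 := by
      have habs2 : ‖1 + w‖ = ‖1 - w‖ := by
        rw [show (1 + w : ℂ) = 2 * a by rw [ha]; ring,
          show (1 - w : ℂ) = 2 * (1 - a) by rw [ha]; ring, norm_mul, norm_mul, habs]
      have h2 : Complex.normSq (1 + w) = Complex.normSq (1 - w) := by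
        have := congrArg (fun x => x ^ 2) habs2
        simpa [Complex.sq_norm] using this
      simp only [Complex.normSq_apply, Complex.add_re, Complex.add_im, Complex.sub_re,
        Complex.sub_im, Complex.one_re, Complex.one_im] at h2
      nlinarith [h2]
    have him : w.im ≠ 0 := by
      intro h
      exact hw0 (Complex.ext hre h)
    -- compute z from hw
    have hwre : (w ^ 2).re = - (w.im ^ 2) := by
      rw [pow_two, Complex.mul_re, hre]
      ring
    have hwim : (w ^ 2).im = 0 := by
      rw [pow_two, Complex.mul_im, hre]
      ring
    have hre4 : 1 + 4 * z.re = - (w.im ^ 2) := by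
      have := congrArg Complex.re hw
      simp only [Complex.add_re, Complex.mul_re, Complex.one_re, Complex.ofReal_re] at this
      rw [hwre] at this
      simp at this
      linarith [this]
    have him4 : z.im = 0 := by
      have := congrArg Complex.im hw
      rw [hwim] at this
      simp at this
      linarith [this]
    refine ⟨him4, ?_⟩
    have : w.im ^ 2 > 0 := by positivity
    linarith [hre4]
end
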